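/- arXiv:0707.0447 — 13 statements merged into one kernel-verified Lean document; each statement's English description precedes it below -/
import Mathlib

section
/- Let R be a ring with identity and let S be a subring of R (containing the identity) which is strongly π-regular, i.e. for every x ∈ S the descending chain of left ideals Sx ⊇ Sx² ⊇ Sx³ ⊇ ... of S stabilizes. If x ∈ S is invertible in R, then x⁻¹ ∈ S. -/
/-- A ring `S` is strongly π-regular if for every `x ∈ S` the descending chain of left
ideals `Sx ⊇ Sx² ⊇ ⋯` stabilizes; equivalently, for every `x ∈ S` there are `k ≥ 1`
and `s ∈ S` with `x ^ k = s * x ^ (k + 1)`. -/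
def IsStronglyPiRegularRing (S : Type*) [Ring S] : Prop :=
  ∀ x : S, ∃ k : ℕ, 1 ≤ k ∧ ∃ s : S, x ^ k = s * x ^ (k + 1)

theorem Units.inv_eq_of_pow_eq_mul_pow_succ {M : Type*} [Monoid M] (x : Mˣ) {s : M} {k : ℕ}
    (h : (x : M) ^ k = s * (x : M) ^ (k + 1)) : ((x⁻¹ : Mˣ) : M) = s := by
  have hsx : 1 * ((x ^ k : Mˣ) : M) = s * x * ((x ^ k : Mˣ) : M) := by
    rw [one_mul, Units.val_pow_eq_pow_val, mul_assoc, ← pow_succ', h]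
  rw [Units.mul_left_inj] at hsx
  exact Units.inv_eq_of_mul_eq_one_left hsx.symm

/-- If `S` is a strongly π-regular subring of a ring `R` and `x ∈ S` is invertible
in `R`, then `x⁻¹ ∈ S`. -/
theorem stmt_0 {R : Type*} [Ring R] (S : Subring R)
    (hS : IsStronglyPiRegularRing S)
    (x : Rˣ) (hx : (x : R) ∈ S) :
    ((x⁻¹ : Rˣ) : R) ∈ S := by
  obtain ⟨k, -, s, hs⟩ := hS ⟨x, hx⟩
  rw [Units.inv_eq_of_pow_eq_mul_pow_succ x (congrArg Subtype.val hs)]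
  exact s.2
end

section
/- Let S be a subring of a ring R (both with the same identity) such that R, viewed as a left S-module, is Noetherian. If x ∈ S is invertible in R, then x⁻¹ ∈ S. -/
/-! With `y = x⁻¹`, the cyclic submodules `S • yⁿ` increase, since `yⁿ = x • yⁿ⁺¹` and `x ∈ S`.
By the Noetherian hypothesis they become stationary, so `yⁿ⁺¹ = s * yⁿ` for some `s ∈ S`,
and cancelling the unit `yⁿ` gives `y = s ∈ S`. -/

open Submodule

namespace Subring

variable {R : Type*} [Ring R] (S : Subring R)

theorem monotone_span_singleton_inv_pow (x : Rˣ) (hx : (x : R) ∈ S) :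
    Monotone fun n : ℕ => span S {((x⁻¹ : Rˣ) : R) ^ n} := by
  refine monotone_nat_of_le_succ fun n => ?_
  rw [span_singleton_le_iff_mem, mem_span_singleton]
  exact ⟨⟨x, hx⟩, by simp [Subring.smul_def, pow_succ']⟩

theorem mem_of_pow_succ_mem_span_singleton_pow {y : R} (hy : IsUnit y) {n : ℕ}
    (h : y ^ (n + 1) ∈ span S {y ^ n}) : y ∈ S := by
  obtain ⟨s, hs⟩ := mem_span_singleton.mp h
  have hsy : (s : R) = y :=
    (hy.pow n).mul_left_injective (by simpa [Subring.smul_def, ← pow_succ'] using hs)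
  exact hsy ▸ s.2

end Subring

/-- If `S` is a subring of a ring `R` such that `R` is Noetherian as a left `S`-module,
and `x ∈ S` is invertible in `R`, then `x⁻¹ ∈ S`. -/
theorem stmt_2 {R : Type*} [Ring R] (S : Subring R)
    (hNoeth : IsNoetherian S R)
    (x : Rˣ) (hx : (x : R) ∈ S) :
    ((x⁻¹ : Rˣ) : R) ∈ S := by
  obtain ⟨n, hn⟩ := monotone_stabilizes_iff_noetherian.mpr hNoeth
    ⟨_, S.monotone_span_singleton_inv_pow x hx⟩
  have hstable : span S {((x⁻¹ : Rˣ) : R) ^ n} = span S {((x⁻¹ : Rˣ) : R) ^ (n + 1)} :=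
    hn (n + 1) n.le_succ
  refine S.mem_of_pow_succ_mem_span_singleton_pow (x⁻¹).isUnit (n := n) ?_
  rw [hstable]
  exact mem_span_singleton_self _
end

section
/- Let R be a left Noetherian ring and n ≥ 1. If S is a subring of the matrix ring M_n(R) containing all scalar matrices rI with r ∈ R, then S ∩ U(M_n(R)) = U(S); that is, every matrix in S invertible in M_n(R) has its inverse in S. -/
/-!
Put `b = A⁻¹`. Since `Mₙ(R)` is a finitely generated left module over the left Noetherian ring
`R`, the ascending chain `span_R {1, b, …, bᵏ}` stabilises, so `b ^ (m + 1) = ∑_{i ≤ m} rᵢ bⁱ`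
for some `m` and `rᵢ ∈ R`. Multiplying on the right by `A ^ m` gives `b = ∑_{i ≤ m} rᵢ A ^ (m - i)`,
which lies in `S` because `S` contains `A` and the scalars `rᵢ • 1`.
-/

theorem exists_pow_succ_mem_span_pow {R M : Type*} [Semiring R] [Semiring M] [Module R M]
    [IsNoetherian R M] (b : M) :
    ∃ m : ℕ, b ^ (m + 1) ∈ Submodule.span R ((b ^ ·) '' Set.Iic m) := by
  let N : ℕ →o Submodule R M :=
    ⟨fun k => Submodule.span R ((b ^ ·) '' Set.Iic k),
      fun _ _ h => Submodule.span_mono (Set.image_mono (Set.Iic_subset_Iic.mpr h))⟩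
  obtain ⟨m, hm⟩ := monotone_stabilizes_iff_noetherian.mpr ‹_› N
  refine ⟨m, ?_⟩
  change _ ∈ N m
  rw [hm (m + 1) m.le_succ]
  exact Submodule.subset_span ⟨m + 1, Set.mem_Iic.mpr le_rfl, rfl⟩

def Subring.toSubmoduleOfSMulOneMem {R M : Type*} [Semiring R] [Ring M] [Module R M]
    [IsScalarTower R M M] (S : Subring M) (hS : ∀ r : R, r • (1 : M) ∈ S) : Submodule R M where
  toAddSubmonoid := S.toAddSubmonoid
  smul_mem' r x hx := smul_one_mul r x ▸ S.mul_mem (hS r) hx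

theorem Units.inv_pow_mul_pow_of_le {M : Type*} [Monoid M] (a : Mˣ) {i m : ℕ} (h : i ≤ m) :
    ((a⁻¹ : Mˣ) : M) ^ i * (a : M) ^ m = (a : M) ^ (m - i) := by
  rw [← pow_mul_pow_sub _ h, ← mul_assoc, ← Units.val_pow_eq_pow_val,
    ← Units.val_pow_eq_pow_val, ← Units.val_mul, inv_pow, inv_mul_cancel, Units.val_one, one_mul]

theorem Subring.inv_mem_of_isNoetherian {R M : Type*} [Ring R] [Ring M] [Module R M]
    [IsScalarTower R M M] [IsNoetherian R M] (S : Subring M) (hS : ∀ r : R, r • (1 : M) ∈ S)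
    (a : Mˣ) (ha : (a : M) ∈ S) : ((a⁻¹ : Mˣ) : M) ∈ S := by
  obtain ⟨m, hm⟩ := exists_pow_succ_mem_span_pow (R := R) ((a⁻¹ : Mˣ) : M)
  have hspan : Submodule.span R ((((a⁻¹ : Mˣ) : M) ^ ·) '' Set.Iic m) ≤
      (S.toSubmoduleOfSMulOneMem hS).comap (LinearMap.mulRight R ((a : M) ^ m)) := by
    rw [Submodule.span_le]
    rintro _ ⟨i, hi, rfl⟩
    change _ * _ ∈ S
    rw [a.inv_pow_mul_pow_of_le hi]
    exact S.pow_mem ha _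
  have hmem : ((a⁻¹ : Mˣ) : M) ^ (m + 1) * (a : M) ^ m ∈ S := hspan hm
  rwa [pow_succ', mul_assoc, a.inv_pow_mul_pow_of_le le_rfl, Nat.sub_self, pow_zero,
    mul_one] at hmem

theorem stmt_5_general {R : Type*} [Ring R] [IsNoetherianRing R]
    (n : ℕ)
    (S : Subring (Matrix (Fin n) (Fin n) R))
    (hscal : ∀ r : R, r • (1 : Matrix (Fin n) (Fin n) R) ∈ S)
    (A : (Matrix (Fin n) (Fin n) R)ˣ) (hA : A.val ∈ S) :
    (A⁻¹).val ∈ S :=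
  S.inv_mem_of_isNoetherian hscal A hA

/-- Let `R` be a left Noetherian ring and `n ≥ 1`. If `S` is a subring of `Mₙ(R)`
containing all scalar matrices `r • I` with `r ∈ R`, then every matrix in `S` invertible
in `Mₙ(R)` has its inverse in `S` (i.e. `S ∩ U(Mₙ(R)) = U(S)`). -/
theorem stmt_5 {R : Type*} [Ring R] [IsNoetherianRing R]
    (n : ℕ) (hn : 1 ≤ n)
    (S : Subring (Matrix (Fin n) (Fin n) R))
    (hscal : ∀ r : R, r • (1 : Matrix (Fin n) (Fin n) R) ∈ S)
    (A : (Matrix (Fin n) (Fin n) R)ˣ) (hA : A.val ∈ S) :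
    (A⁻¹).val ∈ S :=
  stmt_5_general n S hscal A hA
end

section
/- Let R be a ring and P_1, ..., P_t a finite collection of (two-sided) ideals of R such that the intersection P_1 ∩ P_2 ∩ ... ∩ P_t is a nil ideal. Let S be a subring of R, and for each i let S/P_i = {s + P_i : s ∈ S} be the corresponding subring of the factor ring R/P_i. If (S/P_i) ∩ U(R/P_i) = U(S/P_i) for all i ∈ {1, ..., t}, then S ∩ U(R) = U(S). -/
/-!
Lifting the inverse of `x` from `R/Pᵢ` gives `sᵢ ∈ S` with `1 - x sᵢ ∈ Pᵢ`. Elements of the form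
`1 - x w` with `w ∈ S` are closed under products, so multiplying these over all `i` gives `w ∈ S`
with `1 - x w` in every `Pᵢ`, hence nilpotent. Then `x w` is a unit of `S`, so `x` has a right
inverse in `S`, which must be `x⁻¹`.
-/

section

variable {R : Type*} [Ring R]

theorem Subring.inv_mem_of_isNilpotent_one_sub_mul (S : Subring R) {x : Rˣ} (hx : (x : R) ∈ S)
    {w : R} (hw : w ∈ S) (hnil : IsNilpotent (1 - x * w)) : ((x⁻¹ : Rˣ) : R) ∈ S := by
  have hnilS : IsNilpotent (1 - ⟨x, hx⟩ * ⟨w, hw⟩ : S) :=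
    (IsNilpotent.map_iff (f := S.subtype) Subtype.val_injective).mp hnil
  obtain ⟨u, hu⟩ : IsUnit (⟨x, hx⟩ * ⟨w, hw⟩ : S) := by simpa using hnilS.isUnit_one_sub
  have hright : (x : R) * (w * ((u⁻¹ : Sˣ) : R)) = 1 := by
    rw [← mul_assoc]
    exact congrArg Subtype.val (hu ▸ u.mul_inv)
  rw [Units.inv_eq_of_mul_eq_one_right hright]
  exact S.mul_mem hw (u⁻¹ : Sˣ).val.property

theorem Subring.exists_one_sub_mul_mem_of_forall {ι : Type*} (P : ι → TwoSidedIdeal R)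
    (S : Subring R) {x : R} (hx : x ∈ S) (I : Finset ι)
    (hP : ∀ i ∈ I, ∃ s ∈ S, 1 - x * s ∈ P i) :
    ∃ w ∈ S, ∀ i ∈ I, 1 - x * w ∈ P i := by
  classical
  induction I using Finset.induction_on with
  | empty => exact ⟨0, S.zero_mem, by simp⟩
  | insert j I _ ih =>
    obtain ⟨w, hwS, hwP⟩ := ih fun i hi => hP i (Finset.mem_insert_of_mem hi)
    obtain ⟨s, hsS, hsP⟩ := hP j (Finset.mem_insert_self j I)
    have hprod : (1 - x * w) * (1 - x * s) = 1 - x * (w + s - w * x * s) := by noncomm_ring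
    refine ⟨w + s - w * x * s, S.sub_mem (S.add_mem hwS hsS) (S.mul_mem (S.mul_mem hwS hx) hsS),
      fun i hi => hprod ▸ ?_⟩
    rcases Finset.mem_insert.mp hi with rfl | hi
    · exact (P i).mul_mem_left _ _ hsP
    · exact (P i).mul_mem_right _ _ (hwP i hi)

theorem TwoSidedIdeal.exists_one_sub_mul_mem_of_mk_inv_mem_map (P : TwoSidedIdeal R)
    (S : Subring R) (x : Rˣ)
    (hinv : RingCon.mk' P.ringCon ((x⁻¹ : Rˣ) : R) ∈ S.map (RingCon.mk' P.ringCon)) :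
    ∃ s ∈ S, 1 - x * s ∈ P := by
  obtain ⟨s, hsS, hs⟩ := hinv
  refine ⟨s, hsS, ?_⟩
  have hinvs : ((x⁻¹ : Rˣ) : R) - s ∈ P := (P.rel_iff _ _).mp (P.ringCon.eq.mp hs.symm)
  simpa [mul_sub] using P.mul_mem_left (x : R) _ hinvs

end

/-- Let `P₁, …, Pₜ` be two-sided ideals of a ring `R` whose intersection is a nil ideal,
and let `S` be a subring of `R`.  If for every `i` the image subring
`S/Pᵢ = {s + Pᵢ : s ∈ S}` of the factor ring `R/Pᵢ` satisfies
`(S/Pᵢ) ∩ U(R/Pᵢ) = U(S/Pᵢ)`, then `S ∩ U(R) = U(S)`, i.e. every element of `S`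
invertible in `R` has its inverse in `S`. -/
theorem stmt_6 {R : Type*} [Ring R] (t : ℕ) (P : Fin t → TwoSidedIdeal R)
    (hnil : ∀ x : R, (∀ i, x ∈ P i) → IsNilpotent x)
    (S : Subring R)
    (h : ∀ i : Fin t, ∀ u : ((P i).ringCon.Quotient)ˣ,
      u.val ∈ S.map (RingCon.mk' (P i).ringCon) →
      (u⁻¹).val ∈ S.map (RingCon.mk' (P i).ringCon))
    (x : Rˣ) (hx : (x : R) ∈ S) :
    ((x⁻¹ : Rˣ) : R) ∈ S := by
  have hlift : ∀ i ∈ Finset.univ, ∃ s ∈ S, 1 - x * s ∈ P i := fun i _ =>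
    (P i).exists_one_sub_mul_mem_of_mk_inv_mem_map S x <| by
      simpa [← map_inv] using
        h i (Units.map (RingCon.mk' (P i).ringCon).toMonoidHom x) ⟨x, hx, rfl⟩
  obtain ⟨w, hwS, hwP⟩ := S.exists_one_sub_mul_mem_of_forall P hx Finset.univ hlift
  exact S.inv_mem_of_isNilpotent_one_sub_mul hx hwS
    (hnil _ fun i => hwP i (Finset.mem_univ i))
end

section
/- Let R be a ring satisfying the ascending chain condition on two-sided ideals, and let S ⊆ R be a subring such that for every prime ideal P ◁ R the equality (S/P) ∩ U(R/P) = U(S/P) holds, where S/P = {s + P : s ∈ S} is viewed as a subring of R/P. Then S ∩ U(R) = U(S). -/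
/-!
Noetherian induction on two-sided ideals: say `S` is inverse-closed modulo `P` when every
`s ∈ S` invertible modulo `P` has an inverse modulo `P` lying in `S`. If this fails for some
ideal, it fails for a maximal such `P`, which by hypothesis is not prime, so `A * B ⊆ P` for
ideals `A, B ⊋ P`. If `r` inverts `s ∈ S` modulo `P` and `t, t' ∈ S` invert it modulo `A`
and `B`, then `(r - t) s (r - t') ∈ A * B ⊆ P`, which says that `t + t' - t s t' ∈ S`
inverts `s` modulo `P`. Taking `P = 0` gives the theorem.
-/

namespace TwoSidedIdeal

variable {R : Type*} [Ring R]

def IsPrime (P : TwoSidedIdeal R) : Prop :=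
  ∀ A B : TwoSidedIdeal R, (∀ a ∈ A, ∀ b ∈ B, a * b ∈ P) → A ≤ P ∨ B ≤ P

lemma mk'_eq_mk'_iff (P : TwoSidedIdeal R) {x y : R} :
    RingCon.mk' P.ringCon x = RingCon.mk' P.ringCon y ↔ x - y ∈ P :=
  (RingCon.eq _).trans (P.rel_iff x y)

lemma mul_mem_of_mem_sup {P A B : TwoSidedIdeal R} (hAB : ∀ a ∈ A, ∀ b ∈ B, a * b ∈ P)
    {a b : R} (ha : a ∈ A ⊔ P) (hb : b ∈ B ⊔ P) : a * b ∈ P := by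
  obtain ⟨a₀, ha₀, p, hp, rfl⟩ := mem_sup.mp ha
  obtain ⟨b₀, hb₀, q, hq, rfl⟩ := mem_sup.mp hb
  rw [add_mul, mul_add]
  exact P.add_mem (P.add_mem (hAB _ ha₀ _ hb₀) (P.mul_mem_left _ _ hq))
    (P.mul_mem_right _ _ hp)

theorem induction_on_prime [WellFoundedGT (TwoSidedIdeal R)] {Q : TwoSidedIdeal R → Prop}
    (prime : ∀ P, P.IsPrime → Q P)
    (of_mul_le : ∀ P A B, P < A → P < B → (∀ a ∈ A, ∀ b ∈ B, a * b ∈ P) → Q A → Q B → Q P)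
    (P : TwoSidedIdeal R) : Q P := by
  induction P using WellFoundedGT.induction with
  | _ P IH =>
  by_cases hP : P.IsPrime
  · exact prime P hP
  obtain ⟨A, B, hAB, hA, hB⟩ :
      ∃ A B : TwoSidedIdeal R, (∀ a ∈ A, ∀ b ∈ B, a * b ∈ P) ∧ ¬A ≤ P ∧ ¬B ≤ P := by
    simpa [IsPrime, not_or] using hP
  have hPA : P < A ⊔ P := right_lt_sup.mpr hA
  have hPB : P < B ⊔ P := right_lt_sup.mpr hB
  exact of_mul_le P _ _ hPA hPB (fun a ha b hb => mul_mem_of_mem_sup hAB ha hb)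
    (IH _ hPA) (IH _ hPB)

end TwoSidedIdeal

namespace Subring

variable {R : Type*} [Ring R]

/-- The elementwise form of `(S/P) ∩ U(R/P) = U(S/P)`. -/
def IsInvClosedMod (S : Subring R) (P : TwoSidedIdeal R) : Prop :=
  ∀ s ∈ S, ∀ r : R, s * r - 1 ∈ P → r * s - 1 ∈ P → ∃ t ∈ S, r - t ∈ P

lemma isInvClosedMod_of_units {S : Subring R} {P : TwoSidedIdeal R}
    (h : ∀ u : (P.ringCon.Quotient)ˣ,
      u.val ∈ S.map (RingCon.mk' P.ringCon) → (u⁻¹).val ∈ S.map (RingCon.mk' P.ringCon)) :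
    S.IsInvClosedMod P := by
  intro s hs r hsr hrs
  have h₁ := (P.mk'_eq_mk'_iff (x := s * r) (y := 1)).mpr hsr
  have h₂ := (P.mk'_eq_mk'_iff (x := r * s) (y := 1)).mpr hrs
  rw [map_mul, map_one] at h₁ h₂
  obtain ⟨t, ht, htr⟩ := h ⟨_, _, h₁, h₂⟩ ⟨s, hs, rfl⟩
  exact ⟨t, ht, (P.mk'_eq_mk'_iff).mp htr.symm⟩

lemma IsInvClosedMod.of_mul_le {S : Subring R} {P A B : TwoSidedIdeal R}
    (hPA : P ≤ A) (hPB : P ≤ B) (hAB : ∀ a ∈ A, ∀ b ∈ B, a * b ∈ P)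
    (hA : S.IsInvClosedMod A) (hB : S.IsInvClosedMod B) : S.IsInvClosedMod P := by
  intro s hs r hsr hrs
  obtain ⟨t, ht, htA⟩ := hA s hs r (hPA hsr) (hPA hrs)
  obtain ⟨t', ht', htB⟩ := hB s hs r (hPB hsr) (hPB hrs)
  refine ⟨t + t' - t * s * t', S.sub_mem (S.add_mem ht ht') (S.mul_mem (S.mul_mem ht hs) ht'),
    ?_⟩
  have hprod : (r - t) * s * (r - t') ∈ P := hAB _ (A.mul_mem_right _ _ htA) _ htB
  have hexpand : r - (t + t' - t * s * t') =
      (r - t) * s * (r - t') - ((r * s - 1) * r - (r * s - 1) * t' - t * (s * r - 1)) := by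
    noncomm_ring
  rw [hexpand]
  exact P.sub_mem hprod (P.sub_mem (P.sub_mem (P.mul_mem_right _ _ hrs)
    (P.mul_mem_right _ _ hrs)) (P.mul_mem_left _ _ hsr))

lemma IsInvClosedMod.inv_mem {S : Subring R} (h : S.IsInvClosedMod ⊥) (x : Rˣ) (hx : ↑x ∈ S) :
    ↑x⁻¹ ∈ S := by
  obtain ⟨t, ht, hxt⟩ := h x hx ↑x⁻¹ (by simp) (by simp)
  rwa [sub_eq_zero.mp ((TwoSidedIdeal.mem_bot R).mp hxt)]

end Subring

/-- Let `R` be a ring satisfying the ascending chain condition on two-sided ideals, and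
let `S ⊆ R` be a subring such that for every prime (two-sided) ideal `P ◁ R`
(prime meaning: for two-sided ideals `A, B`, `AB ⊆ P` implies `A ⊆ P` or `B ⊆ P`)
the image subring `S/P = {s + P : s ∈ S}` of `R/P` satisfies
`(S/P) ∩ U(R/P) = U(S/P)`.  Then `S ∩ U(R) = U(S)`, i.e. every element of `S`
invertible in `R` has its inverse in `S`. -/
theorem stmt_7 {R : Type*} [Ring R]
    (hacc : ∀ f : ℕ →o TwoSidedIdeal R, ∃ N : ℕ, ∀ k : ℕ, N ≤ k → f k = f N)
    (S : Subring R)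
    (h : ∀ P : TwoSidedIdeal R,
      (∀ A B : TwoSidedIdeal R, (∀ a ∈ A, ∀ b ∈ B, a * b ∈ P) → A ≤ P ∨ B ≤ P) →
      ∀ u : (P.ringCon.Quotient)ˣ,
        u.val ∈ S.map (RingCon.mk' P.ringCon) →
        (u⁻¹).val ∈ S.map (RingCon.mk' P.ringCon))
    (x : Rˣ) (hx : (x : R) ∈ S) :
    ((x⁻¹ : Rˣ) : R) ∈ S := by
  have : WellFoundedGT (TwoSidedIdeal R) :=
    wellFoundedGT_iff_monotone_chain_condition.mpr fun f =>
      (hacc f).imp fun _ hN k hk => (hN k hk).symm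
  have hbot : S.IsInvClosedMod ⊥ :=
    TwoSidedIdeal.induction_on_prime (fun P hP => Subring.isInvClosedMod_of_units (h P hP))
      (fun _ _ _ hPA hPB => Subring.IsInvClosedMod.of_mul_le hPA.le hPB.le) ⊥
  exact hbot.inv_mem x hx
end

section
/- Let m ≥ 1 and let R be a ring satisfying the Lie nilpotency identity [[[...[[x_1,x_2],x_3],...],x_m],x_{m+1}] = 0 (where [x,y] = xy − yx), and suppose every nonzero integer (i.e. every element k·1 with k ∈ ℤ \ {0}) is a unit in R. Let n ≥ 1 and let S be a subring of M_n(R) containing all scalar matrices rI with r ∈ R. Then S ∩ U(M_n(R)) = U(S); that is, every matrix in S invertible in M_n(R) has its inverse in S. -/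
/-!
Let `T` be the two-sided ideal generated by the commutators, so that `R ⧸ T` is commutative.
Over `R ⧸ T` the Cayley–Hamilton theorem writes the inverse of the image of `A` as a polynomial
in it; lifting the coefficients gives `B ∈ S` such that `A * B - 1` has all its entries in `T`.
Lie nilpotency together with `1/2 ∈ R` makes `T` locally nilpotent: the left-normed commutators
of maximal length are central and square to zero, and modulo the ideal they generate the ring has
smaller Lie nilpotency index. Hence `A * B - 1` is nilpotent, `A * B` is a unit of `S`, and
`A⁻¹ = B * (A * B)⁻¹ ∈ S`.
-/

/-- The left-normed iterated commutator: `leftNormedComm 0 x = x 0` and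
`leftNormedComm (k+1) x = [leftNormedComm k x, x (k+1)]`, where `[a,b] = a*b - b*a`.
Thus `leftNormedComm m x = [[[⋯[[x 0, x 1], x 2]⋯], x (m-1)], x m]` involves `m + 1`
variables. -/
def leftNormedComm {R : Type*} [Ring R] : ℕ → (ℕ → R) → R
  | 0, x => x 0
  | k + 1, x => leftNormedComm k x * x (k + 1) - x (k + 1) * leftNormedComm k x

section LeftNormedComm

attribute [local instance] LieRing.ofAssociativeRing

variable {R : Type*} [Ring R]

theorem leftNormedComm_succ (k : ℕ) (x : ℕ → R) :
    leftNormedComm (k + 1) x = ⁅leftNormedComm k x, x (k + 1)⁆ :=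
  (Ring.lie_def _ _).symm

theorem leftNormedComm_congr {k : ℕ} {x y : ℕ → R} (h : ∀ i ≤ k, x i = y i) :
    leftNormedComm k x = leftNormedComm k y := by
  induction k with
  | zero => exact h 0 le_rfl
  | succ k ih =>
    rw [leftNormedComm_succ, leftNormedComm_succ, ih fun i hi => h i (by omega), h (k + 1) le_rfl]

theorem leftNormedComm_eq_zero_of_le {m k : ℕ} (hLie : ∀ x : ℕ → R, leftNormedComm m x = 0)
    (hmk : m ≤ k) (x : ℕ → R) : leftNormedComm k x = 0 := by
  induction k, hmk using Nat.le_induction with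
  | base => exact hLie x
  | succ k _ ih => rw [leftNormedComm_succ, ih, zero_lie]

theorem map_leftNormedComm {S : Type*} [Ring S] (f : R →+* S) (k : ℕ) (x : ℕ → R) :
    f (leftNormedComm k x) = leftNormedComm k (f ∘ x) := by
  induction k with
  | zero => rfl
  | succ k ih => simp only [leftNormedComm_succ, Ring.lie_def, map_sub, map_mul, ih, Function.comp]

variable (R) in
/-- The term `γ_{k+1}` of the lower central series of `R` viewed as a Lie ring. -/
def lowerCentral (k : ℕ) : AddSubgroup R :=
  AddSubgroup.closure (Set.range (leftNormedComm k))

theorem leftNormedComm_mem_lowerCentral (k : ℕ) (x : ℕ → R) :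
    leftNormedComm k x ∈ lowerCentral R k :=
  AddSubgroup.subset_closure ⟨x, rfl⟩

theorem lie_mem_lowerCentral_succ {k : ℕ} {a : R} (ha : a ∈ lowerCentral R k) (b : R) :
    ⁅a, b⁆ ∈ lowerCentral R (k + 1) := by
  induction ha using AddSubgroup.closure_induction with
  | mem _ h =>
    obtain ⟨x, rfl⟩ := h
    have hx : leftNormedComm k (Function.update x (k + 1) b) = leftNormedComm k x :=
      leftNormedComm_congr fun i hi => Function.update_of_ne (by omega) _ _
    simpa [leftNormedComm_succ, hx] using
      leftNormedComm_mem_lowerCentral (k + 1) (Function.update x (k + 1) b)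
  | zero => simp
  | add _ _ _ _ h₁ h₂ => simpa [add_lie] using add_mem h₁ h₂
  | neg _ _ h => simpa [neg_lie] using neg_mem h

theorem lie_mem_lowerCentral {i j : ℕ} {a b : R} (ha : a ∈ lowerCentral R i)
    (hb : b ∈ lowerCentral R j) : ⁅a, b⁆ ∈ lowerCentral R (i + j + 1) := by
  induction j generalizing i a b with
  | zero => exact lie_mem_lowerCentral_succ ha b
  | succ j ih =>
    induction hb using AddSubgroup.closure_induction with
    | mem _ h =>
      obtain ⟨x, rfl⟩ := h
      rw [leftNormedComm_succ, leibniz_lie, ← lie_skew (leftNormedComm j x)]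
      refine add_mem (lie_mem_lowerCentral_succ (ih ha (leftNormedComm_mem_lowerCentral j x)) _)
        (neg_mem ?_)
      have := ih (lie_mem_lowerCentral_succ ha (x (j + 1))) (leftNormedComm_mem_lowerCentral j x)
      rwa [show i + 1 + j + 1 = i + (j + 1) + 1 by omega] at this
    | zero => simp
    | add _ _ _ _ h₁ h₂ => simpa [lie_add] using add_mem h₁ h₂
    | neg _ _ h => simpa [lie_neg] using neg_mem h

theorem eq_zero_of_mem_lowerCentral {m k : ℕ} (hLie : ∀ x : ℕ → R, leftNormedComm m x = 0)
    (hmk : m ≤ k) {a : R} (ha : a ∈ lowerCentral R k) : a = 0 := by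
  have : lowerCentral R k = ⊥ := by
    rw [lowerCentral, AddSubgroup.closure_eq_bot_iff]
    rintro _ ⟨x, rfl⟩
    exact leftNormedComm_eq_zero_of_le hLie hmk x
  simpa [this] using ha

-- `⁅·, a⁆` is a derivation with vanishing square, so `0 = ⁅⁅b * b, a⁆, a⁆ = 2 * ⁅a, b⁆ ^ 2`.
theorem lie_mul_self_eq_zero (h2 : IsUnit (2 : R)) {a : R} (ha : ∀ y : R, ⁅⁅y, a⁆, a⁆ = 0)
    (b : R) : ⁅a, b⁆ * ⁅a, b⁆ = 0 := by
  have key : ⁅⁅b * b, a⁆, a⁆ = ⁅⁅b, a⁆, a⁆ * b + 2 * (⁅a, b⁆ * ⁅a, b⁆) + b * ⁅⁅b, a⁆, a⁆ := by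
    simp only [Ring.lie_def]; noncomm_ring
  rw [ha, ha, zero_mul, mul_zero, add_zero, zero_add, eq_comm] at key
  exact h2.mul_right_eq_zero.mp key

theorem leftNormedComm_mem_center {m : ℕ} (hLie : ∀ x : ℕ → R, leftNormedComm (m + 1) x = 0)
    (x : ℕ → R) : leftNormedComm m x ∈ Set.center R := by
  refine Semigroup.mem_center_iff.2 fun r => ?_
  have := eq_zero_of_mem_lowerCentral hLie le_rfl
    (lie_mem_lowerCentral_succ (leftNormedComm_mem_lowerCentral m x) r)
  rw [Ring.lie_def, sub_eq_zero] at this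
  exact this.symm

theorem leftNormedComm_mul_self {m : ℕ} (hLie : ∀ x : ℕ → R, leftNormedComm (m + 2) x = 0)
    (h2 : IsUnit (2 : R)) (x : ℕ → R) :
    leftNormedComm (m + 1) x * leftNormedComm (m + 1) x = 0 := by
  rw [leftNormedComm_succ]
  refine lie_mul_self_eq_zero h2 (fun y => eq_zero_of_mem_lowerCentral hLie
    (k := m + 1 + m + 1) (by omega) ?_) _
  have hy : ⁅y, leftNormedComm m x⁆ ∈ lowerCentral R (m + 1) := by
    rw [← lie_skew]
    exact neg_mem (lie_mem_lowerCentral_succ (leftNormedComm_mem_lowerCentral m x) y)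
  exact lie_mem_lowerCentral hy (leftNormedComm_mem_lowerCentral m x)

end LeftNormedComm

section CentralIdeal

open Submodule
open scoped Pointwise

variable {R : Type*} [Ring R]

theorem Submodule.commute_span_of_subset_center {s : Set R} (hs : s ⊆ Set.center R)
    (M : Submodule ℤ R) : Commute (span ℤ s) M := by
  have hcomm : s * (M : Set R) = (M : Set R) * s := by
    ext x
    simp only [Set.mem_mul]
    constructor
    · rintro ⟨a, ha, b, hb, rfl⟩
      exact ⟨b, hb, a, ha, Semigroup.mem_center_iff.1 (hs ha) b⟩
    · rintro ⟨b, hb, a, ha, rfl⟩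
      exact ⟨a, ha, b, hb, (Semigroup.mem_center_iff.1 (hs ha) b).symm⟩
  calc span ℤ s * M = span ℤ (s * (M : Set R)) := by rw [← span_mul_span, span_eq]
    _ = M * span ℤ s := by rw [hcomm, ← span_mul_span, span_eq]

theorem Submodule.isNilpotent_top_mul_span {s : Finset R} (hs : (s : Set R) ⊆ Set.center R)
    (hsq : ∀ c ∈ s, c * c = 0) : IsNilpotent ((⊤ : Submodule ℤ R) * span ℤ (s : Set R)) := by
  classical
  induction s using Finset.induction_on with
  | empty => exact ⟨1, by simp⟩
  | insert c s _ ih =>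
    rw [Finset.coe_insert, Set.insert_subset_iff] at hs
    have hc : {c} ⊆ Set.center R := Set.singleton_subset_iff.2 hs.1
    rw [Finset.coe_insert, span_insert, ← add_eq_sup, mul_add]
    refine Commute.isNilpotent_add ?_ ⟨2, ?_⟩ (ih hs.2 fun d hd => hsq d (by simp [hd]))
    · exact ((Commute.refl ⊤).mul_right (commute_span_of_subset_center hs.2 ⊤).symm).mul_left
        ((commute_span_of_subset_center hc ⊤).mul_right (commute_span_of_subset_center hc _))
    · rw [(commute_span_of_subset_center hc ⊤).symm.mul_pow, sq (span ℤ {c}), span_mul_span,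
        Set.singleton_mul_singleton, hsq c (by simp)]
      simp

theorem Submodule.mul_mem_top_mul_span {s : Set R} (hs : s ⊆ Set.center R) {x : R}
    (hx : x ∈ (⊤ : Submodule ℤ R) * span ℤ s) (a b : R) :
    a * x * b ∈ (⊤ : Submodule ℤ R) * span ℤ s := by
  have hle : ⊤ * (⊤ * span ℤ s) * ⊤ ≤ ⊤ * span ℤ s := by
    rw [mul_assoc, mul_assoc, (commute_span_of_subset_center hs ⊤).eq, ← mul_assoc, ← mul_assoc]
    exact mul_le_mul_left le_top _
  exact hle (mul_mem_mul (mul_mem_mul mem_top hx) mem_top)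

theorem Submodule.top_mul_span_mono {s t : Set R} (h : s ⊆ t) :
    (⊤ : Submodule ℤ R) * span ℤ s ≤ ⊤ * span ℤ t :=
  mul_le_mul' le_rfl (span_mono h)

theorem exists_finset_mem_top_mul_span {C : Set R} (hC : C ⊆ Set.center R) {x : R}
    (hx : x ∈ TwoSidedIdeal.span C) :
    ∃ s : Finset R, ↑s ⊆ C ∧ x ∈ (⊤ : Submodule ℤ R) * span ℤ (s : Set R) := by
  classical
  induction hx using TwoSidedIdeal.span_induction with
  | mem x hx =>
    refine ⟨{x}, by simpa using hx, ?_⟩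
    simpa using mul_mem_mul (mem_top (x := 1)) (mem_span_singleton_self (R := ℤ) x)
  | zero => exact ⟨∅, by simp, zero_mem _⟩
  | add x y _ _ hx hy =>
    obtain ⟨s, hsC, hs⟩ := hx
    obtain ⟨t, htC, ht⟩ := hy
    refine ⟨s ∪ t, by simp [hsC, htC], add_mem ?_ ?_⟩
    · exact top_mul_span_mono (by simp) hs
    · exact top_mul_span_mono (by simp) ht
  | neg x _ hx =>
    obtain ⟨s, hsC, hs⟩ := hx
    exact ⟨s, hsC, neg_mem hs⟩
  | left_absorb a x _ hx =>
    obtain ⟨s, hsC, hs⟩ := hx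
    exact ⟨s, hsC, by simpa using mul_mem_top_mul_span (hsC.trans hC) hs a 1⟩
  | right_absorb b x _ hx =>
    obtain ⟨s, hsC, hs⟩ := hx
    exact ⟨s, hsC, by simpa using mul_mem_top_mul_span (hsC.trans hC) hs 1 b⟩

theorem exists_finset_le_top_mul_span {C : Set R} (hC : C ⊆ Set.center R)
    {M : Submodule ℤ R} (hM : M.FG) (hMC : (M : Set R) ⊆ TwoSidedIdeal.span C) :
    ∃ s : Finset R, ↑s ⊆ C ∧ M ≤ (⊤ : Submodule ℤ R) * span ℤ (s : Set R) := by
  classical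
  obtain ⟨G, rfl⟩ := hM
  choose! f hfC hf using fun g (hg : g ∈ G) =>
    exists_finset_mem_top_mul_span hC (hMC (subset_span hg))
  refine ⟨G.biUnion f, by simpa using hfC, span_le.2 fun g hg => ?_⟩
  exact top_mul_span_mono (Finset.coe_subset.2 (Finset.subset_biUnion_of_mem f hg)) (hf g hg)

end CentralIdeal

section LocallyNilpotent

universe u

variable {R : Type*} [Ring R]

/-- `span ℤ F ^ K = 0` means that all products of `K` elements of `F` vanish. -/
def IsLocallyNilpotent (T : Set R) : Prop :=
  ∀ F : Set R, F.Finite → F ⊆ T → IsNilpotent (Submodule.span ℤ F)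

theorem IsLocallyNilpotent.mono {T T' : Set R} (h : T ⊆ T') (hT' : IsLocallyNilpotent T') :
    IsLocallyNilpotent T :=
  fun F hF hFT => hT' F hF (hFT.trans h)

theorem IsLocallyNilpotent.of_image_quotient {C : Set R} (hC : C ⊆ Set.center R)
    (hsq : ∀ c ∈ C, c * c = 0) {T : Set R}
    (hT : IsLocallyNilpotent ((TwoSidedIdeal.span C).ringCon.mk' '' T)) :
    IsLocallyNilpotent T := by
  intro F hF hFT
  set π := (TwoSidedIdeal.span C).ringCon.mk'
  obtain ⟨N, hN⟩ := hT (π '' F) (hF.image π) (Set.image_mono hFT)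
  have hker : ((Submodule.span ℤ F ^ N : Submodule ℤ R) : Set R) ⊆ TwoSidedIdeal.span C := by
    intro x hx
    have hmap : (Submodule.span ℤ F ^ N).map π.toIntAlgHom.toLinearMap = ⊥ := by
      rw [Submodule.map_pow, Submodule.map_span]
      exact hN
    have hπx := Submodule.mem_map_of_mem (f := π.toIntAlgHom.toLinearMap) hx
    rw [hmap, Submodule.mem_bot] at hπx
    rw [SetLike.mem_coe, ← TwoSidedIdeal.ker_ringCon_mk' (TwoSidedIdeal.span C),
      TwoSidedIdeal.mem_ker]
    exact hπx
  obtain ⟨s, hsC, hle⟩ := exists_finset_le_top_mul_span hC ((Submodule.fg_span hF).pow N) hker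
  obtain ⟨k, hk⟩ := Submodule.isNilpotent_top_mul_span (hsC.trans hC) fun c hc => hsq c (hsC hc)
  refine ⟨N * k, le_antisymm ?_ bot_le⟩
  rw [pow_mul, ← hk]
  exact pow_le_pow_left' hle k

variable (R) in
def commutatorIdeal : TwoSidedIdeal R :=
  TwoSidedIdeal.span {z | ∃ x y : R, x * y - y * x = z}

theorem map_mem_commutatorIdeal {S : Type*} [Ring S] (f : R →+* S) {x : R}
    (hx : x ∈ commutatorIdeal R) : f x ∈ commutatorIdeal S := by
  have hle : commutatorIdeal R ≤ TwoSidedIdeal.comap f (commutatorIdeal S) := by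
    refine TwoSidedIdeal.span_le.2 ?_
    rintro _ ⟨a, b, rfl⟩
    rw [SetLike.mem_coe, TwoSidedIdeal.mem_comap]
    exact TwoSidedIdeal.subset_span ⟨f a, f b, by simp⟩
  exact (TwoSidedIdeal.mem_comap f).1 (hle hx)

instance : CommRing (commutatorIdeal R).ringCon.Quotient where
  mul_comm a b := by
    obtain ⟨x, rfl⟩ := (commutatorIdeal R).ringCon.mk'_surjective a
    obtain ⟨y, rfl⟩ := (commutatorIdeal R).ringCon.mk'_surjective b
    rw [← map_mul, ← map_mul, ← sub_eq_zero, ← map_sub, ← TwoSidedIdeal.mem_ker,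
      TwoSidedIdeal.ker_ringCon_mk']
    exact TwoSidedIdeal.subset_span ⟨x, y, rfl⟩

theorem isLocallyNilpotent_commutatorIdeal {R : Type u} [Ring R] {m : ℕ}
    (hLie : ∀ x : ℕ → R, leftNormedComm m x = 0) (h2 : IsUnit (2 : R)) :
    IsLocallyNilpotent (commutatorIdeal R : Set R) := by
  suffices key : ∀ (m : ℕ) (R : Type u) [Ring R], (∀ x : ℕ → R, leftNormedComm (m + 1) x = 0) →
      IsUnit (2 : R) → IsLocallyNilpotent (commutatorIdeal R : Set R) from
    key m R (leftNormedComm_eq_zero_of_le hLie m.le_succ) h2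
  intro m
  induction m with
  | zero =>
    intro R _ hLie _ F _ hF
    have hbot : commutatorIdeal R = ⊥ := by
      refine le_bot_iff.1 (TwoSidedIdeal.span_le.2 ?_)
      rintro _ ⟨x, y, rfl⟩
      rw [SetLike.mem_coe, TwoSidedIdeal.mem_bot]
      simpa [leftNormedComm] using hLie fun i => if i = 0 then x else y
    refine ⟨1, ?_⟩
    rw [pow_one, Submodule.zero_eq_bot, Submodule.span_eq_bot]
    intro x hx
    simpa [hbot] using hF hx
  | succ m ih =>
    intro R _ hLie h2
    set C := Set.range (leftNormedComm (m + 1) : (ℕ → R) → R)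
    set π := (TwoSidedIdeal.span C).ringCon.mk'
    have hLieQ : ∀ y : ℕ → (TwoSidedIdeal.span C).ringCon.Quotient,
        leftNormedComm (m + 1) y = 0 := by
      intro y
      obtain ⟨x, rfl⟩ := (TwoSidedIdeal.span C).ringCon.mk'_surjective.comp_left y
      rw [← map_leftNormedComm, ← TwoSidedIdeal.mem_ker, TwoSidedIdeal.ker_ringCon_mk']
      exact TwoSidedIdeal.subset_span ⟨x, rfl⟩
    refine IsLocallyNilpotent.of_image_quotient (C := C) ?_ ?_ ((ih _ hLieQ (h2.map π)).mono ?_)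
    · rintro _ ⟨x, rfl⟩
      exact leftNormedComm_mem_center hLie x
    · rintro _ ⟨x, rfl⟩
      exact leftNormedComm_mul_self hLie h2 x
    · rintro _ ⟨x, hx, rfl⟩
      exact map_mem_commutatorIdeal π hx

end LocallyNilpotent

section Matrices

variable {ι : Type*} [Fintype ι] [DecidableEq ι]

theorem Matrix.pow_apply_mem_pow {R : Type*} [Ring R] {M : Submodule ℤ R} {N : Matrix ι ι R}
    (hN : ∀ i j, N i j ∈ M) (k : ℕ) (i j : ι) : (N ^ k) i j ∈ M ^ k := by
  induction k generalizing i j with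
  | zero =>
    rw [pow_zero, pow_zero, Matrix.one_apply]
    split_ifs
    exacts [Submodule.one_le.1 le_rfl, zero_mem _]
  | succ k ih =>
    rw [pow_succ, pow_succ, Matrix.mul_apply]
    exact sum_mem fun t _ => Submodule.mul_mem_mul (ih i t) (hN t j)

theorem Matrix.isNilpotent_of_isLocallyNilpotent {R : Type*} [Ring R] {T : Set R}
    (hT : IsLocallyNilpotent T) {N : Matrix ι ι R} (hN : ∀ i j, N i j ∈ T) : IsNilpotent N := by
  obtain ⟨K, hK⟩ := hT _ (Set.finite_range fun p : ι × ι => N p.1 p.2)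
    (Set.range_subset_iff.2 fun p => hN p.1 p.2)
  refine ⟨K, Matrix.ext fun i j => ?_⟩
  have := Matrix.pow_apply_mem_pow (M := Submodule.span ℤ (Set.range fun p : ι × ι => N p.1 p.2))
    (fun i j => Submodule.subset_span (Set.mem_range_self (i, j))) K i j
  rwa [hK, Submodule.zero_eq_bot, Submodule.mem_bot] at this

theorem Subring.inv_mem_of_isNilpotent_mul_sub_one {M : Type*} [Ring M] (S : Subring M)
    {a : Mˣ} {b : M} (ha : ↑a ∈ S) (hb : b ∈ S) (hab : IsNilpotent (↑a * b - 1)) :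
    ↑a⁻¹ ∈ S := by
  let e : S := ⟨↑a * b - 1, sub_mem (mul_mem ha hb) (one_mem S)⟩
  obtain ⟨u, hu⟩ :=
    ((IsNilpotent.map_iff (r := e) (f := S.subtype) Subtype.val_injective).1 hab).isUnit_one_add
  have hprod : ↑a * b = (u : S) := by rw [hu]; simp [e]
  have : ↑a⁻¹ = b * ((u⁻¹ : Sˣ) : S) := Units.inv_eq_of_mul_eq_one_right <| by
    rw [← mul_assoc, hprod, ← S.coe_mul, Units.mul_inv, S.coe_one]
  rw [this]
  exact mul_mem hb (u⁻¹ : Sˣ).1.2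

theorem Matrix.inv_mem_adjoin {Q : Type*} [CommRing Q] (A : (Matrix ι ι Q)ˣ) :
    ↑A⁻¹ ∈ Algebra.adjoin Q {(A : Matrix ι ι Q)} := by
  set p := (A : Matrix ι ι Q).charpoly
  obtain ⟨c, hc⟩ : IsUnit (p.coeff 0) := by
    have hdet := (Matrix.isUnit_iff_isUnit_det _).1 A.isUnit
    rw [Matrix.det_eq_sign_charpoly_coeff] at hdet
    exact isUnit_of_mul_isUnit_right hdet
  have hCH : Polynomial.aeval (A : Matrix ι ι Q) p.divX * A = -algebraMap Q _ ↑c := by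
    have h : Polynomial.aeval (A : Matrix ι ι Q) p = 0 := Matrix.aeval_self_charpoly _
    rw [← p.divX_mul_X_add, map_add, map_mul, Polynomial.aeval_X, Polynomial.aeval_C, ← hc] at h
    exact eq_neg_of_add_eq_zero_left h
  have hinv : ↑A⁻¹ = -(algebraMap Q _ ↑c⁻¹ * Polynomial.aeval (A : Matrix ι ι Q) p.divX) := by
    refine Units.inv_eq_of_mul_eq_one_left ?_
    rw [neg_mul, mul_assoc, hCH, mul_neg, neg_neg, ← map_mul, Units.inv_mul, map_one]
  rw [hinv]
  exact neg_mem (mul_mem (Subalgebra.algebraMap_mem _ _)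
    (Polynomial.aeval_mem_adjoin_singleton Q _))

theorem Matrix.inv_mem_of_isLocallyNilpotent_ker {R Q : Type*} [Ring R] [CommRing Q]
    (π : R →+* Q) (hπ : Function.Surjective π)
    (hker : IsLocallyNilpotent (TwoSidedIdeal.ker π : Set R))
    (S : Subring (Matrix ι ι R)) (hscal : ∀ r : R, r • (1 : Matrix ι ι R) ∈ S)
    (A : (Matrix ι ι R)ˣ) (hA : ↑A ∈ S) : ↑A⁻¹ ∈ S := by
  set A' := Units.map (RingHom.mapMatrix (m := ι) π).toMonoidHom A
  have hadjoin : ∀ X ∈ Algebra.adjoin Q {(A' : Matrix ι ι Q)}, X ∈ S.map π.mapMatrix := by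
    intro X hX
    induction hX using Algebra.adjoin_induction with
    | mem X hX =>
      rw [Set.mem_singleton_iff.1 hX]
      exact Subring.mem_map.2 ⟨_, hA, rfl⟩
    | algebraMap q =>
      obtain ⟨r, rfl⟩ := hπ q
      refine ⟨r • 1, hscal r, ?_⟩
      ext i j
      by_cases hij : i = j <;> simp [Matrix.algebraMap_eq_diagonal, hij]
    | add _ _ _ _ hX hY => exact add_mem hX hY
    | mul _ _ _ _ hX hY => exact mul_mem hX hY
  obtain ⟨B, hBS, hB⟩ := hadjoin _ (Matrix.inv_mem_adjoin A')
  refine S.inv_mem_of_isNilpotent_mul_sub_one hA hBS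
    (Matrix.isNilpotent_of_isLocallyNilpotent hker fun i j => ?_)
  have h1 : π.mapMatrix ((A : Matrix ι ι R) * B - 1) = 0 := by
    rw [map_sub, map_mul, hB, map_one]
    exact sub_eq_zero.2 A'.mul_inv
  rw [SetLike.mem_coe, TwoSidedIdeal.mem_ker]
  simpa using congrFun (congrFun h1 i) j

end Matrices

theorem stmt_8_general {R : Type*} [Ring R] (m : ℕ)
    (hLie : ∀ x : ℕ → R, leftNormedComm m x = 0)
    (hZ : ∀ k : ℤ, k ≠ 0 → IsUnit (k : R))
    (n : ℕ)
    (S : Subring (Matrix (Fin n) (Fin n) R))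
    (hscal : ∀ r : R, r • (1 : Matrix (Fin n) (Fin n) R) ∈ S)
    (A : (Matrix (Fin n) (Fin n) R)ˣ) (hA : A.val ∈ S) :
    (A⁻¹).val ∈ S := by
  have h2 : IsUnit (2 : R) := by simpa using hZ 2 two_ne_zero
  refine Matrix.inv_mem_of_isLocallyNilpotent_ker (commutatorIdeal R).ringCon.mk'
    (RingCon.mk'_surjective _) ?_ S hscal A hA
  rw [TwoSidedIdeal.ker_ringCon_mk']
  exact isLocallyNilpotent_commutatorIdeal hLie h2

/-- Let `m ≥ 1` and let `R` be a ring satisfying the Lie nilpotency identity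
`[[[⋯[[x₁,x₂],x₃],⋯],x_m],x_{m+1}] = 0`, in which every nonzero integer is a unit.
Let `n ≥ 1` and let `S` be a subring of `Mₙ(R)` containing all scalar matrices `r • I`
with `r ∈ R`.  Then every matrix in `S` invertible in `Mₙ(R)` has its inverse in `S`
(i.e. `S ∩ U(Mₙ(R)) = U(S)`). -/
theorem stmt_8 {R : Type*} [Ring R] (m : ℕ) (hm : 1 ≤ m)
    (hLie : ∀ x : ℕ → R, leftNormedComm m x = 0)
    (hZ : ∀ k : ℤ, k ≠ 0 → IsUnit (k : R))
    (n : ℕ) (hn : 1 ≤ n)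
    (S : Subring (Matrix (Fin n) (Fin n) R))
    (hscal : ∀ r : R, r • (1 : Matrix (Fin n) (Fin n) R) ∈ S)
    (A : (Matrix (Fin n) (Fin n) R)ˣ) (hA : A.val ∈ S) :
    (A⁻¹).val ∈ S :=
  stmt_8_general m hLie hZ n S hscal A hA
end

section
/- Let θ be a reflexive and transitive binary relation on {1, 2, ..., n} and let R be a left Noetherian ring. If A ∈ M_n(θ,R) is invertible in M_n(R), then A⁻¹ ∈ M_n(θ,R). -/
/-!
Right multiplication by `A` is an automorphism `f` of the Noetherian module of row vectors `Rⁿ`,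
and by transitivity of `θ` it maps the submodule `V` of rows supported on `{k | θ i k}` into
itself. Hence `f` induces a surjective, and therefore injective (Orzech), endomorphism of
`Rⁿ ⧸ V`, i.e. `f v ∈ V` forces `v ∈ V`. Since `f` sends the `i`-th row of `A⁻¹` to the unit
vector `eᵢ ∈ V`, that row lies in `V`.
-/

open Function

theorem Submodule.comap_le_of_map_le_of_surjective {R M : Type*} [Ring R] [AddCommGroup M]
    [Module R M] [IsNoetherian R M] {f : M →ₗ[R] M} (hf : Surjective f) {V : Submodule R M}
    (hV : V.map f ≤ V) : V.comap f ≤ V := by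
  let fV := V.mapQ V f (map_le_iff_le_comap.mp hV)
  have hfV : Injective fV := by
    refine IsNoetherian.injective_of_surjective_endomorphism fV ?_
    rw [← LinearMap.range_eq_top, range_mapQ, LinearMap.range_eq_top.mpr hf, map_top, range_mkQ]
  intro x hx
  refine (Quotient.mk_eq_zero V).mp (hfV ?_)
  rw [mapQ_apply, map_zero]
  exact (Quotient.mk_eq_zero V).mpr hx

namespace Matrix

variable {ι R : Type*} [Fintype ι] (θ : ι → ι → Prop)

/-- Membership in the structural matrix ring `M(θ, R)`. -/
def IsStructural [Zero R] (A : Matrix ι ι R) : Prop :=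
  ∀ i j, ¬ θ i j → A i j = 0

def rowSubmodule [Semiring R] (i : ι) : Submodule R (ι → R) :=
  Submodule.pi {k | ¬ θ i k} fun _ => ⊥

variable {θ}

theorem IsStructural.vecMul_mem_rowSubmodule [Semiring R]
    (htrans : ∀ i j k, θ i j → θ j k → θ i k) {A : Matrix ι ι R} (hA : IsStructural θ A)
    {i : ι} {v : ι → R} (hv : v ∈ rowSubmodule θ i) :
    v ᵥ* A ∈ rowSubmodule θ i := by
  intro k hk
  refine Finset.sum_eq_zero fun l _ => show v l * A l k = 0 from ?_
  by_cases hl : θ i l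
  · rw [hA l k fun hlk => hk (htrans i l k hl hlk), mul_zero]
  · rw [(Submodule.mem_bot R).mp (hv l hl), zero_mul]

theorem IsStructural.units_inv [DecidableEq ι] [Ring R] [IsNoetherianRing R]
    (hrefl : ∀ i, θ i i) (htrans : ∀ i j k, θ i j → θ j k → θ i k)
    {A : (Matrix ι ι R)ˣ} (hA : IsStructural θ A.val) : IsStructural θ (A⁻¹).val := by
  intro i j hij
  have hsurj : Surjective A.val.vecMulLinear := fun w =>
    ⟨w ᵥ* (A⁻¹).val, by rw [vecMulLinear_apply, vecMul_vecMul, A.inv_mul, vecMul_one]⟩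
  have hinvariant : (rowSubmodule θ i).map A.val.vecMulLinear ≤ rowSubmodule θ i := by
    rintro _ ⟨v, hv, rfl⟩
    exact hA.vecMul_mem_rowSubmodule htrans hv
  have hsingle : Pi.single i (1 : R) ∈ rowSubmodule θ i := fun k hk =>
    Pi.single_eq_of_ne (fun hki : k = i => hk (hki ▸ hrefl i)) 1
  have hrow : Pi.single i (1 : R) ᵥ* (A⁻¹).val ∈ rowSubmodule θ i := by
    refine Submodule.comap_le_of_map_le_of_surjective hsurj hinvariant ?_
    rwa [Submodule.mem_comap, vecMulLinear_apply, vecMul_vecMul, A.inv_mul, vecMul_one]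
  rw [single_one_vecMul] at hrow
  exact hrow j hij

end Matrix

/-- Let `θ` be a reflexive and transitive binary relation on `{1, …, n}` and let `R` be a
left Noetherian ring.  If `A` belongs to the structural matrix ring
`Mₙ(θ,R) = {A ∈ Mₙ(R) : A i j = 0 whenever (i,j) ∉ θ}` and is invertible in `Mₙ(R)`,
then `A⁻¹ ∈ Mₙ(θ,R)`. -/
theorem stmt_10 {R : Type*} [Ring R] [IsNoetherianRing R] {n : ℕ}
    (θ : Fin n → Fin n → Prop)
    (hrefl : ∀ i, θ i i) (htrans : ∀ i j k, θ i j → θ j k → θ i k)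
    (A : (Matrix (Fin n) (Fin n) R)ˣ)
    (hA : ∀ i j, ¬ θ i j → A.val i j = 0) :
    ∀ i j, ¬ θ i j → (A⁻¹).val i j = 0 :=
  Matrix.IsStructural.units_inv hrefl htrans hA
end

section
/- Let θ be a reflexive and transitive binary relation on {1, 2, ..., n} and let R be a commutative ring. If A ∈ M_n(θ,R) is invertible in M_n(R), then A⁻¹ ∈ M_n(θ,R). -/
/-!
Write the characteristic polynomial of `A` as `X * q + c`, so that `c = ± det A`. By
Cayley–Hamilton, `A * q(A) + c • 1 = 0`. If `A` is invertible then `c` is a unit, so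
`A⁻¹ = -c⁻¹ • q(A)` is a polynomial in `A`. Reflexivity and transitivity of `θ` make
`M_n(θ, R)` a subalgebra of `M_n(R)`, which therefore contains every polynomial in `A`.
-/

open Polynomial

theorem Subalgebra.units_inv_mem_of_aeval_eq_zero {R A : Type*} [CommRing R] [Ring A]
    [Algebra R A] (S : Subalgebra R A) (u : Aˣ) (hu : (u : A) ∈ S) {p : R[X]}
    (hp : aeval (u : A) p = 0) (hc : IsUnit (p.coeff 0)) : ((u⁻¹ : Aˣ) : A) ∈ S := by
  obtain ⟨c, hc⟩ := hc
  set q := aeval (u : A) p.divX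
  have hroot : (u : A) * q + c • 1 = 0 := by
    rw [← hp, Units.smul_def, hc]
    conv_rhs => rw [← X_mul_divX_add p]
    rw [map_add, map_mul, aeval_X, aeval_C, Algebra.algebraMap_eq_smul_one]
  have hinv : ((u⁻¹ : Aˣ) : A) = c⁻¹ • -q := by
    rw [eq_inv_smul_iff, eq_neg_iff_add_eq_zero, add_comm, ← u.inv_mul_cancel_left q,
      ← mul_smul_one, ← mul_add, hroot, mul_zero]
  have hq : q ∈ S :=
    Algebra.adjoin_le (Set.singleton_subset_iff.mpr hu) (aeval_mem_adjoin_singleton R _)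
  rw [hinv]
  exact S.smul_mem (S.neg_mem hq) _

namespace Matrix

variable (R : Type*) [CommRing R] {n : Type*} [Fintype n] [DecidableEq n]

def structuralSubalgebra (θ : n → n → Prop) (hrefl : ∀ i, θ i i)
    (htrans : ∀ i j k, θ i j → θ j k → θ i k) : Subalgebra R (Matrix n n R) where
  carrier := {A | ∀ i j, ¬ θ i j → A i j = 0}
  mul_mem' {A B} hA hB i j hij := by
    refine (mul_apply (M := A) (N := B)).trans (Finset.sum_eq_zero fun k _ => ?_)
    by_cases hik : θ i k
    · rw [hB k j fun hkj => hij (htrans i k j hik hkj), mul_zero]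
    · rw [hA i k hik, zero_mul]
  add_mem' {A B} hA hB i j hij := by
    rw [add_apply, hA i j hij, hB i j hij, add_zero]
  algebraMap_mem' r i j hij := by
    rw [algebraMap_matrix_apply, if_neg fun h : i = j => hij (h ▸ hrefl i)]

end Matrix

/-- Let `θ` be a reflexive and transitive binary relation on `{1, …, n}` and let `R` be a
commutative ring.  If `A ∈ Mₙ(θ,R)` is invertible in `Mₙ(R)`, then `A⁻¹ ∈ Mₙ(θ,R)`. -/
theorem stmt_12 {R : Type*} [CommRing R] {n : ℕ}
    (θ : Fin n → Fin n → Prop)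
    (hrefl : ∀ i, θ i i) (htrans : ∀ i j k, θ i j → θ j k → θ i k)
    (A : (Matrix (Fin n) (Fin n) R)ˣ)
    (hA : ∀ i j, ¬ θ i j → A.val i j = 0) :
    ∀ i j, ¬ θ i j → (A⁻¹).val i j = 0 := by
  have hdet : IsUnit A.val.det := (Matrix.isUnit_iff_isUnit_det _).mp A.isUnit
  rw [Matrix.det_eq_sign_charpoly_coeff] at hdet
  exact (Matrix.structuralSubalgebra R θ hrefl htrans).units_inv_mem_of_aeval_eq_zero A hA
    (Matrix.aeval_self_charpoly _) (isUnit_of_mul_isUnit_right hdet)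
end

section
/- Let θ' be a reflexive and transitive binary relation on {1,...,n} and θ'' a reflexive and transitive binary relation on {1,...,m}. Then for every ring R there is a ring isomorphism M_n(θ', M_m(θ'',R)) ≅ M_{nm}(θ̄, R), where θ̄ is the reflexive and transitive relation on {1,...,nm} given by θ̄ = {(i,j) : (⌈i/m⌉, ⌈j/m⌉) ∈ θ' and (i_{(m)}, j_{(m)}) ∈ θ''}, with i_{(m)} the unique element of {1,...,m} congruent to i mod m. -/
/-- The structural matrix ring `Mₙ(θ,R)` determined by a reflexive and transitive
relation `θ` on `{1, …, n}`: the subring of `Mₙ(R)` consisting of all matrices `A`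
with `A i j = 0` whenever `(i,j) ∉ θ`. -/
def structuralMatrixRing (R : Type*) [Ring R] {n : ℕ} (θ : Fin n → Fin n → Prop)
    (hrefl : ∀ i, θ i i) (htrans : ∀ i j k, θ i j → θ j k → θ i k) :
    Subring (Matrix (Fin n) (Fin n) R) where
  carrier := {A | ∀ i j, ¬ θ i j → A i j = 0}
  zero_mem' := fun _ _ _ => rfl
  one_mem' := by
    intro i j h
    exact Matrix.one_apply_ne fun e => h (e ▸ hrefl i)
  add_mem' := by
    intro A B hA hB i j h
    simp [Matrix.add_apply, hA i j h, hB i j h]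
  neg_mem' := by
    intro A hA i j h
    simp [Matrix.neg_apply, hA i j h]
  mul_mem' := by
    intro A B hA hB i j h
    rw [Matrix.mul_apply]
    refine Finset.sum_eq_zero fun k _ => ?_
    by_cases hik : θ i k
    · rw [hB k j fun hkj => h (htrans i k j hik hkj), mul_zero]
    · rw [hA i k hik, zero_mul]

/-- The relation `θ̄` on `{1, …, nm}` built from `θ'` on `{1, …, n}` and `θ''` on
`{1, …, m}`: `(i,j) ∈ θ̄` iff `(⌈i/m⌉, ⌈j/m⌉) ∈ θ'` and `(i₍ₘ₎, j₍ₘ₎) ∈ θ''`.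
In the `0`-based indexing of `Fin (n * m)` this reads: `(i / m, j / m) ∈ θ'` and
`(i % m, j % m) ∈ θ''`. -/
def thetaBar {n m : ℕ} (θ' : Fin n → Fin n → Prop) (θ'' : Fin m → Fin m → Prop) :
    Fin (n * m) → Fin (n * m) → Prop := fun i j =>
  θ' ⟨i.val / m, Nat.div_lt_of_lt_mul (by rw [Nat.mul_comm m n]; exact i.isLt)⟩
     ⟨j.val / m, Nat.div_lt_of_lt_mul (by rw [Nat.mul_comm m n]; exact j.isLt)⟩ ∧
  θ'' ⟨i.val % m, Nat.mod_lt _ (by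
        rcases Nat.eq_zero_or_pos m with h | h
        · exact absurd i.isLt (by subst h; simp)
        · exact h)⟩
      ⟨j.val % m, Nat.mod_lt _ (by
        rcases Nat.eq_zero_or_pos m with h | h
        · exact absurd j.isLt (by subst h; simp)
        · exact h)⟩

theorem thetaBar_refl {n m : ℕ} {θ' : Fin n → Fin n → Prop} {θ'' : Fin m → Fin m → Prop}
    (h1 : ∀ i, θ' i i) (h2 : ∀ i, θ'' i i) : ∀ i, thetaBar θ' θ'' i i :=
  fun _ => ⟨h1 _, h2 _⟩

theorem thetaBar_trans {n m : ℕ} {θ' : Fin n → Fin n → Prop} {θ'' : Fin m → Fin m → Prop}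
    (h1 : ∀ i j k, θ' i j → θ' j k → θ' i k)
    (h2 : ∀ i j k, θ'' i j → θ'' j k → θ'' i k) :
    ∀ i j k, thetaBar θ' θ'' i j → thetaBar θ' θ'' j k → thetaBar θ' θ'' i k :=
  fun _ _ _ hij hjk => ⟨h1 _ _ _ hij.1 hjk.1, h2 _ _ _ hij.2 hjk.2⟩

/-!
Flattening block matrices, block `(p, r)` entry `(q, s)` going to position
`(p * m + q, r * m + s)`, is a ring isomorphism `Mₙ(Mₘ(R)) ≃ M_{nm}(R)`: the composite of
`Matrix.compRingEquiv` with reindexing along `finProdFinEquiv`. On `Mₙ(θ', Mₘ(θ'', R))` it is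
injective, and its image is exactly `M_{nm}(θ̄, R)`, because position `(p * m + q, r * m + s)` is
forced to vanish on either side precisely when `(p, r) ∉ θ'` or `(q, s) ∉ θ''`.
-/

open Matrix

section

variable {R : Type*} [Ring R] {n m : ℕ}

theorem mem_structuralMatrixRing {θ : Fin n → Fin n → Prop} {hrefl : ∀ i, θ i i}
    {htrans : ∀ i j k, θ i j → θ j k → θ i k} {A : Matrix (Fin n) (Fin n) R} :
    A ∈ structuralMatrixRing R θ hrefl htrans ↔ ∀ i j, ¬ θ i j → A i j = 0 :=
  Iff.rfl

theorem thetaBar_iff (θ' : Fin n → Fin n → Prop) (θ'' : Fin m → Fin m → Prop)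
    (i j : Fin (n * m)) :
    thetaBar θ' θ'' i j ↔ θ' i.divNat j.divNat ∧ θ'' i.modNat j.modNat :=
  Iff.rfl

theorem thetaBar_finProdFinEquiv (θ' : Fin n → Fin n → Prop) (θ'' : Fin m → Fin m → Prop)
    (p r : Fin n) (q s : Fin m) :
    thetaBar θ' θ'' (finProdFinEquiv (p, q)) (finProdFinEquiv (r, s)) ↔ θ' p r ∧ θ'' q s := by
  have hpq := finProdFinEquiv.symm_apply_apply (p, q)
  have hrs := finProdFinEquiv.symm_apply_apply (r, s)
  simp only [finProdFinEquiv_symm_apply, Prod.ext_iff] at hpq hrs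
  rw [thetaBar_iff, hpq.1, hpq.2, hrs.1, hrs.2]

theorem Matrix.ext_finProdFinEquiv {α : Type*} {A B : Matrix (Fin (n * m)) (Fin (n * m)) α}
    (h : ∀ p r q s, A (finProdFinEquiv (p, q)) (finProdFinEquiv (r, s)) =
      B (finProdFinEquiv (p, q)) (finProdFinEquiv (r, s))) : A = B := by
  ext i j
  obtain ⟨⟨p, q⟩, rfl⟩ := finProdFinEquiv.surjective i
  obtain ⟨⟨r, s⟩, rfl⟩ := finProdFinEquiv.surjective j
  exact h p r q s

def blockFlatten (S : Subring (Matrix (Fin m) (Fin m) R)) :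
    Matrix (Fin n) (Fin n) S →+* Matrix (Fin (n * m)) (Fin (n * m)) R :=
  ((compRingEquiv (Fin n) (Fin m) R).trans (reindexRingEquiv R finProdFinEquiv)).toRingHom.comp
    S.subtype.mapMatrix

@[simp]
theorem blockFlatten_apply_finProdFinEquiv (S : Subring (Matrix (Fin m) (Fin m) R))
    (A : Matrix (Fin n) (Fin n) S) (p r : Fin n) (q s : Fin m) :
    blockFlatten S A (finProdFinEquiv (p, q)) (finProdFinEquiv (r, s)) =
      (A p r : Matrix _ _ R) q s := by
  simp [blockFlatten]

theorem blockFlatten_injective (S : Subring (Matrix (Fin m) (Fin m) R)) :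
    Function.Injective (blockFlatten (n := n) S) :=
  ((compRingEquiv (Fin n) (Fin m) R).trans (reindexRingEquiv R finProdFinEquiv)).injective.comp
    (Matrix.map_injective Subtype.val_injective)

variable {θ' : Fin n → Fin n → Prop} {h1r : ∀ i, θ' i i}
  {h1t : ∀ i j k, θ' i j → θ' j k → θ' i k}
  {θ'' : Fin m → Fin m → Prop} {h2r : ∀ i, θ'' i i}
  {h2t : ∀ i j k, θ'' i j → θ'' j k → θ'' i k}

theorem mem_structuralMatrixRing_thetaBar {hrefl : ∀ i, thetaBar θ' θ'' i i}
    {htrans : ∀ i j k, thetaBar θ' θ'' i j → thetaBar θ' θ'' j k → thetaBar θ' θ'' i k}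
    {B : Matrix (Fin (n * m)) (Fin (n * m)) R} :
    B ∈ structuralMatrixRing R (thetaBar θ' θ'') hrefl htrans ↔
      ∀ p r q s, ¬ (θ' p r ∧ θ'' q s) →
        B (finProdFinEquiv (p, q)) (finProdFinEquiv (r, s)) = 0 := by
  simp only [mem_structuralMatrixRing, ← thetaBar_finProdFinEquiv]
  refine ⟨fun hB p r q s => hB _ _, fun hB i j => ?_⟩
  obtain ⟨⟨p, q⟩, rfl⟩ := finProdFinEquiv.surjective i
  obtain ⟨⟨r, s⟩, rfl⟩ := finProdFinEquiv.surjective j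
  exact hB p r q s

theorem map_structuralMatrixRing_blockFlatten :
    (structuralMatrixRing (structuralMatrixRing R θ'' h2r h2t) θ' h1r h1t).map
        (blockFlatten (structuralMatrixRing R θ'' h2r h2t)) =
      structuralMatrixRing R (thetaBar θ' θ'') (thetaBar_refl h1r h2r)
        (thetaBar_trans h1t h2t) := by
  ext B
  rw [mem_structuralMatrixRing_thetaBar, Subring.mem_map]
  constructor
  · rintro ⟨A, hA, rfl⟩ p r q s hpqrs
    rw [blockFlatten_apply_finProdFinEquiv]
    rcases not_and_or.mp hpqrs with hpr | hqs
    · rw [hA p r hpr]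
      rfl
    · exact (A p r).2 q s hqs
  · intro hB
    refine ⟨fun p r => ⟨fun q s => B (finProdFinEquiv (p, q)) (finProdFinEquiv (r, s)),
      fun q s hqs => hB p r q s fun h => hqs h.2⟩,
      fun p r hpr => Subtype.ext <| funext₂ fun q s => hB p r q s fun h => hpr h.1,
      ext_finProdFinEquiv fun p r q s => ?_⟩
    exact blockFlatten_apply_finProdFinEquiv _ _ p r q s

end

/-- For reflexive transitive relations `θ'` on `{1, …, n}` and `θ''` on `{1, …, m}` and
any ring `R`, there is a ring isomorphism `Mₙ(θ', Mₘ(θ'', R)) ≅ M_{nm}(θ̄, R)`. -/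
theorem stmt_13 (R : Type*) [Ring R] {n m : ℕ}
    (θ' : Fin n → Fin n → Prop)
    (h1r : ∀ i, θ' i i) (h1t : ∀ i j k, θ' i j → θ' j k → θ' i k)
    (θ'' : Fin m → Fin m → Prop)
    (h2r : ∀ i, θ'' i i) (h2t : ∀ i j k, θ'' i j → θ'' j k → θ'' i k) :
    Nonempty
      ((structuralMatrixRing (structuralMatrixRing R θ'' h2r h2t) θ' h1r h1t) ≃+*
        (structuralMatrixRing R (thetaBar θ' θ'') (thetaBar_refl h1r h2r)
          (thetaBar_trans h1t h2t))) :=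
  ⟨(Subring.equivMapOfInjective _ _ (blockFlatten_injective _)).trans
    (RingEquiv.subringCongr map_structuralMatrixRing_blockFlatten)⟩
end

section
/- Let θ be a reflexive and transitive binary relation on {1, 2, ..., n} and let R be a PI-ring (a PI-algebra over ℤ ⊆ Z(R)). If A ∈ M_n(θ,R) is invertible in M_n(R), then A⁻¹ ∈ M_n(θ,R). -/
/-- A PI-ring (a PI-algebra over `ℤ ⊆ Z(R)`): a ring satisfying a polynomial identity,
i.e. there is a nonzero polynomial in noncommuting variables over `ℤ` (monomials are
words, encoded as lists of variable indices), at least one of whose monomials of highest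
total degree has coefficient `1`, which vanishes under every substitution of elements
of `R`. -/
def IsPIRing (R : Type*) [Ring R] : Prop :=
  ∃ (k : ℕ) (F : Finset (List (Fin k))) (c : List (Fin k) → ℤ),
    (∃ w ∈ F, c w ≠ 0) ∧
    (∃ w ∈ F, c w = 1 ∧ ∀ w' ∈ F, c w' ≠ 0 → w'.length ≤ w.length) ∧
    ∀ v : Fin k → R, ∑ w ∈ F, c w • (w.map v).prod = 0

/-!
Fix a column `j` and let `P = {u | θ u j}`. By transitivity the block of `A` with rows outside `P`
and columns in `P` vanishes, so `A⁻¹ A = 1` gives `B₁₁ A₁₁ = 1` and `B₂₁ A₁₁ = 0` for the blocks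
of `B = A⁻¹`. Once `A₁₁ B₁₁ = 1` as well, `B₂₁ = B₂₁ A₁₁ B₁₁ = 0`, which is the claim. So it
suffices that a PI-ring is stably finite.

By Kaplansky, a simple module `N` over a PI-ring is finite-dimensional over `D = End_R N`:
otherwise the density theorem yields elements of `R` shifting `d + 1` independent vectors along
a coefficient-`1` monomial `w₀` of degree `d`, and evaluating the identity on them isolates the
coefficient of `w₀`. If now `A B = 1` over `R`, then `B A` maps to `1` in matrices over the
stably finite ring `End_D N`, so the entries of the idempotent `1 - B A` annihilate every simple
module, i.e. lie in the Jacobson radical, and Nakayama's lemma applied to the rows of `1 - B A`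
forces it to vanish.
-/

open Module

theorem List.IsPrefix.append_singleton_prefix_iff {α : Type*} {l L : List α} {a : α}
    (h : l <+: L) : l ++ [a] <+: L ↔ L[l.length]? = some a := by
  obtain ⟨t, rfl⟩ := h
  cases t with
  | nil => simpa using fun h : l ++ [a] <+: l => by simpa using h.length_le
  | cons b t => simp [eq_comm]

theorem List.prod_map_smul_of_shift {R M α : Type*} [Monoid R] [AddMonoid M]
    [DistribMulAction R M] [DecidableEq α] {r : α → R} {X : ℕ → M} {u : List α}
    (hr : ∀ a, ∀ ℓ ≤ u.length, r a • X ℓ = if u[ℓ]? = some a then X (ℓ + 1) else 0)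
    (w : List α) : (w.map r).prod • X 0 = if w.reverse <+: u then X w.length else 0 := by
  induction w with
  | nil => simp
  | cons a w ih =>
    rw [map_cons, prod_cons, mul_smul, ih, reverse_cons]
    by_cases hw : w.reverse <+: u
    · rw [if_pos hw, hr a _ (by simpa using hw.length_le)]
      simp only [hw.append_singleton_prefix_iff, length_reverse, length_cons]
    · rw [if_neg hw, smul_zero, if_neg fun h => hw ((prefix_append _ _).trans h)]

theorem Module.Basis.exists_smul_eq_on_finset {R M ι : Type*} [Ring R] [AddCommGroup M]
    [Module R M] [IsSemisimpleModule R M] (b : Basis ι (End R M) M) (s : Finset ι) (y : ι → M) :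
    ∃ r : R, ∀ i ∈ s, r • b i = y i := by
  classical
  obtain ⟨r, hr⟩ := jacobson_density (b.constr ℕ y) (s.image b)
  exact ⟨r, fun i hi => (hr (b i) (Finset.mem_image_of_mem b hi)).symm.trans (b.constr_basis ℕ y i)⟩

theorem IsPIRing.finite_moduleEnd {R : Type*} [Ring R] (hPI : IsPIRing R) (N : Type*)
    [AddCommGroup N] [Module R N] [IsSimpleModule R N] : Module.Finite (End R N) N := by
  classical
  obtain ⟨k, F, c, -, ⟨w₀, hw₀, hc₀, -⟩, hid⟩ := hPI
  by_contra hfin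
  let b := Basis.ofVectorSpace (End R N) N
  have : Infinite (Basis.ofVectorSpaceIndex (End R N) N) :=
    not_finite_iff_infinite.mp fun _ => hfin (Module.Finite.of_basis b)
  let e := Infinite.natEmbedding (Basis.ofVectorSpaceIndex (End R N) N)
  let u := w₀.reverse
  have hshift : ∀ a : Fin k, ∃ r : R, ∀ ℓ ≤ u.length,
      r • b (e ℓ) = if u[ℓ]? = some a then b (e (ℓ + 1)) else 0 := by
    intro a
    obtain ⟨r, hr⟩ := b.exists_smul_eq_on_finset ((Finset.range (u.length + 1)).map e)
      (Function.extend e (fun ℓ => if u[ℓ]? = some a then b (e (ℓ + 1)) else 0) 0)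
    refine ⟨r, fun ℓ hℓ => (hr _ (Finset.mem_map_of_mem _ ?_)).trans
      (e.injective.extend_apply _ _ _)⟩
    simpa [Nat.lt_succ_iff] using hℓ
  choose r hr using hshift
  have hword := List.prod_map_smul_of_shift (X := fun ℓ => b (e ℓ)) hr
  have htop : ∀ w : List (Fin k), (w.reverse <+: u ∧ w.length = u.length) ↔ w = w₀ := by
    refine fun w => ⟨fun ⟨hp, hl⟩ => List.reverse_inj.mp (hp.eq_of_length (by simpa using hl)),
      ?_⟩
    rintro rfl
    exact ⟨List.prefix_refl _, by simp [u]⟩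
  have hsum : ∑ w ∈ F, c w • (if w.reverse <+: u then b (e w.length) else 0) = 0 := by
    simpa only [Finset.sum_smul, smul_assoc, hword, zero_smul] using congrArg (· • b (e 0)) (hid r)
  have hcoord := congrArg (b.coord (e u.length)) hsum
  simp only [apply_ite, smul_zero, map_sum, LinearMap.map_smul_of_tower, Basis.coord_apply,
    Basis.repr_self, Finsupp.single_apply, EmbeddingLike.apply_eq_iff_eq, zsmul_eq_mul, mul_one,
    map_zero, ← ite_and, htop, Finset.sum_ite_eq', if_pos hw₀,
    hc₀, Int.cast_one] at hcoord
  have := IsSimpleModule.nontrivial R N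
  exact one_ne_zero hcoord

namespace Matrix

variable {R : Type*} [Ring R] {m : Type*} [Fintype m]

theorem eq_zero_of_isIdempotentElem_of_mem_jacobson {E : Matrix m m R} (hE : IsIdempotentElem E)
    (hJ : ∀ s t, E s t ∈ Ring.jacobson R) : E = 0 := by
  have hrow : ∀ s, E s = ∑ t, E s t • E t := fun s => by
    conv_lhs => rw [← hE.eq]
    ext u
    simp [mul_apply, Finset.sum_apply]
  have hrows : Submodule.span R (Set.range E) = ⊥ := by
    refine (Submodule.fg_span (Set.finite_range E)).eq_bot_of_le_jacobson_smul
      (Submodule.span_le.mpr ?_)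
    rintro _ ⟨s, rfl⟩
    rw [hrow s]
    exact Submodule.sum_mem _ fun t _ =>
      Submodule.smul_mem_smul (hJ s t) (Submodule.subset_span ⟨t, rfl⟩)
  ext s t
  simpa using congrFun ((Submodule.eq_bot_iff _).mp hrows (E s) (Submodule.subset_span ⟨s, rfl⟩)) t

variable [DecidableEq m]

theorem one_sub_mul_mem_annihilator {A B : Matrix m m R} (hAB : A * B = 1)
    (N : Type*) [AddCommGroup N] [Module R N] [IsSimpleModule R N]
    [Module.Finite (End R N) N] (s t : m) :
    (1 - B * A) s t ∈ Module.annihilator R N := by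
  classical
  let ρ := (Module.toModuleEnd (End R N) (S := R) N).mapMatrix (m := m)
  have h : ρ (1 - B * A) = 0 := by
    have : ρ A * ρ B = 1 := by rw [← map_mul, hAB, map_one]
    rw [map_sub, map_one, map_mul, mul_eq_one_symm this, sub_self]
  exact Module.mem_annihilator.mpr fun y => LinearMap.congr_fun (congrFun (congrFun h s) t) y

end Matrix

theorem IsStablyFiniteRing.of_finite_moduleEnd {R : Type*} [Ring R]
    (h : ∀ (K : Ideal R) [IsSimpleModule R (R ⧸ K)], Module.Finite (End R (R ⧸ K)) (R ⧸ K)) :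
    IsStablyFiniteRing R := by
  refine ⟨fun m => ⟨fun {A B} hAB => ?_⟩⟩
  have hJ : ∀ s t, (1 - B * A) s t ∈ Ring.jacobson R := by
    intro s t
    rw [Ring.jacobson_eq_sInf_isMaximal]
    refine Submodule.mem_sInf.mpr fun K hK => ?_
    have := isSimpleModule_iff_isCoatom.mpr (Ideal.isMaximal_def.mp hK)
    have := h K
    have h1 := Module.mem_annihilator.mp (Matrix.one_sub_mul_mem_annihilator hAB (R ⧸ K) s t)
      (Submodule.Quotient.mk 1)
    rwa [← Submodule.Quotient.mk_smul, smul_eq_mul, mul_one, Submodule.Quotient.mk_eq_zero] at h1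
  have hE : IsIdempotentElem (1 - B * A) := by
    refine IsIdempotentElem.one_sub ?_
    rw [IsIdempotentElem, mul_assoc, ← mul_assoc A, hAB, one_mul]
  exact (sub_eq_zero.mp (Matrix.eq_zero_of_isIdempotentElem_of_mem_jacobson hE hJ)).symm

theorem IsPIRing.isStablyFiniteRing {R : Type*} [Ring R] (hPI : IsPIRing R) :
    IsStablyFiniteRing R :=
  .of_finite_moduleEnd fun K _ => hPI.finite_moduleEnd (R ⧸ K)

namespace Matrix

variable {R : Type*} [Ring R] {l m n : Type*} [Fintype m]

theorem toBlock_mul_of_toBlock_compl_eq_zero (p : l → Prop) (q : m → Prop) [DecidablePred q]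
    (r : n → Prop) {A : Matrix l m R} {B : Matrix m n R} (hB : B.toBlock (¬ q ·) r = 0) :
    (A * B).toBlock p r = A.toBlock p q * B.toBlock q r := by
  ext i k
  have h0 : ∀ j : {j // ¬ q j}, B j k = 0 := fun j => congrFun (congrFun hB j) k
  simp only [toBlock_apply, mul_apply, ← Fintype.sum_subtype_add_sum_subtype q, h0, mul_zero,
    Finset.sum_const_zero, add_zero]

theorem toBlock_inv_eq_zero_of_toBlock_eq_zero [DecidableEq m] [IsStablyFiniteRing R]
    (A : (Matrix m m R)ˣ) (p : m → Prop) (hA : A.val.toBlock (¬ p ·) p = 0) :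
    (A⁻¹).val.toBlock (¬ p ·) p = 0 := by
  classical
  have hmul : ∀ q : m → Prop,
      (A⁻¹).val.toBlock q p * A.val.toBlock p p = (1 : Matrix m m R).toBlock q p := by
    intro q
    rw [← toBlock_mul_of_toBlock_compl_eq_zero q p p hA, A.inv_mul]
  have h11 : A.val.toBlock p p * (A⁻¹).val.toBlock p p = 1 :=
    mul_eq_one_symm ((hmul p).trans (toBlock_one_self p))
  calc (A⁻¹).val.toBlock (¬ p ·) p
      = (A⁻¹).val.toBlock (¬ p ·) p * A.val.toBlock p p * (A⁻¹).val.toBlock p p := by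
        rw [Matrix.mul_assoc, h11, Matrix.mul_one]
    _ = 0 := by rw [hmul, toBlock_one_disjoint (by exact disjoint_compl_left), Matrix.zero_mul]

end Matrix

/-- Let `θ` be a reflexive and transitive binary relation on `{1, …, n}` and let `R` be
a PI-ring.  If `A ∈ Mₙ(θ,R)` is invertible in `Mₙ(R)`, then `A⁻¹ ∈ Mₙ(θ,R)`. -/
theorem stmt_15 {R : Type*} [Ring R] (hPI : IsPIRing R)
    {n : ℕ} (θ : Fin n → Fin n → Prop)
    (hrefl : ∀ i, θ i i) (htrans : ∀ i j k, θ i j → θ j k → θ i k)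
    (A : (Matrix (Fin n) (Fin n) R)ˣ)
    (hA : ∀ i j, ¬ θ i j → A.val i j = 0) :
    ∀ i j, ¬ θ i j → (A⁻¹).val i j = 0 := by
  have := hPI.isStablyFiniteRing
  intro i j hij
  have hAblock : A.val.toBlock (¬ θ · j) (θ · j) = 0 := by
    ext ⟨u, hu⟩ ⟨v, hv⟩
    exact hA u v fun huv => hu (htrans u v j huv hv)
  exact congrFun (congrFun (Matrix.toBlock_inv_eq_zero_of_toBlock_eq_zero A (θ · j) hAblock)
    ⟨i, hij⟩) ⟨j, hrefl j⟩
end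

section
/- Let θ be a reflexive and transitive binary relation on {1, 2, ..., n} and let R be an arbitrary ring. If A ∈ M_n(θ,R), then the preadjoint matrix A* belongs to M_n(θ,R). -/
/-- The preadjoint `A*` of a matrix `A` over an arbitrary (not necessarily commutative)
ring: `a*_{r,s} = Σ_{τ,ρ} sgn(ρ) · a_{τ(1),ρ(τ(1))} ⋯ a_{τ(s-1),ρ(τ(s-1))} ·
a_{τ(s+1),ρ(τ(s+1))} ⋯ a_{τ(n),ρ(τ(n))}`, where the sum runs over all permutations `τ`
of `{1,…,n} \ {s}` (encoded as permutations of `Fin n` fixing `s`) and all permutations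
`ρ` of `{1,…,n}` with `ρ(s) = r`; the product is taken over the positions
`i ∈ {1,…,n} \ {s}` in increasing order. -/
def preadjoint {R : Type*} [Ring R] {n : ℕ} (A : Matrix (Fin n) (Fin n) R) :
    Matrix (Fin n) (Fin n) R :=
  Matrix.of fun r s =>
    ∑ τ : Equiv.Perm (Fin n), ∑ ρ : Equiv.Perm (Fin n),
      if τ s = s ∧ ρ s = r then
        (Equiv.Perm.sign ρ : ℤ) •
          (((Finset.univ.erase s).sort (· ≤ ·)).map fun i => A (τ i) (ρ (τ i))).prod
      else 0

lemma chain_aux {n : ℕ} (θ : Fin n → Fin n → Prop) (hrefl : ∀ i, θ i i)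
    (htrans : ∀ i j k, θ i j → θ j k → θ i k) (ρ : Equiv.Perm (Fin n))
    (s r : Fin n) (hρ : ρ s = r)
    (hstep : ∀ j, j ≠ s → θ j (ρ j)) : θ r s := by
  by_cases hrs : r = s
  · subst hrs; exact hrefl r
  have hm : 0 < orderOf ρ := orderOf_pos ρ
  have hex : ∃ k, (ρ ^ k) r = s := by
    refine ⟨orderOf ρ - 1, ?_⟩
    have : (ρ ^ (orderOf ρ - 1)) (ρ s) = (ρ ^ (orderOf ρ - 1) * ρ) s := rfl
    rw [← hρ, this, ← pow_succ, Nat.sub_add_cancel hm, pow_orderOf_eq_one]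
    rfl
  have key : ∀ k, (∀ i < k, (ρ ^ i) r ≠ s) → θ r ((ρ ^ k) r) := by
    intro k
    induction k with
    | zero => intro _; simpa using hrefl r
    | succ k ih =>
      intro h
      have h1 : θ r ((ρ ^ k) r) := ih fun i hi => h i (Nat.lt_succ_of_lt hi)
      have h2 : θ ((ρ ^ k) r) (ρ ((ρ ^ k) r)) :=
        hstep _ (h k (Nat.lt_succ_self k))
      have : (ρ ^ (k + 1)) r = ρ ((ρ ^ k) r) := by
        rw [pow_succ']; rfl
      rw [this]
      exact htrans _ _ _ h1 h2
  have hspec := Nat.find_spec hex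
  have := key (Nat.find hex) fun i hi => Nat.find_min hex hi
  rwa [hspec] at this

/-- Let `θ` be a reflexive and transitive binary relation on `{1, …, n}` and let `R`
be an arbitrary ring.  If `A ∈ Mₙ(θ,R)`, then the preadjoint `A*` belongs to
`Mₙ(θ,R)`. -/
theorem stmt_16 {R : Type*} [Ring R] {n : ℕ}
    (θ : Fin n → Fin n → Prop)
    (hrefl : ∀ i, θ i i) (htrans : ∀ i j k, θ i j → θ j k → θ i k)
    (A : Matrix (Fin n) (Fin n) R)
    (hA : ∀ i j, ¬ θ i j → A i j = 0) :
    ∀ r s, ¬ θ r s → preadjoint A r s = 0 := by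
  intro r s hθ
  unfold preadjoint
  rw [Matrix.of_apply]
  refine Finset.sum_eq_zero fun τ _ => Finset.sum_eq_zero fun ρ _ => ?_
  split_ifs with h
  · obtain ⟨hτ, hρ⟩ := h
    -- there is j ≠ s with ¬ θ j (ρ j)
    have hj : ∃ j, j ≠ s ∧ ¬ θ j (ρ j) := by
      by_contra hc
      push_neg at hc
      exact hθ (chain_aux θ hrefl htrans ρ s r hρ fun j hjs => hc j hjs)
    obtain ⟨j, hjs, hjθ⟩ := hj
    have hz : (0 : R) ∈ (((Finset.univ.erase s).sort (· ≤ ·)).map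
        fun i => A (τ i) (ρ (τ i))) := by
      rw [List.mem_map]
      refine ⟨τ⁻¹ j, ?_, ?_⟩
      · rw [Finset.mem_sort, Finset.mem_erase]
        refine ⟨fun he => hjs ?_, Finset.mem_univ _⟩
        have : τ (τ⁻¹ j) = τ s := by rw [he]
        simpa [hτ] using this
      · simp [hA j (ρ j) hjθ]
    rw [List.prod_eq_zero hz, smul_zero]
  · rfl
end

section
/- Let θ be a reflexive and transitive binary relation on {1, 2, ..., n} and let R be a commutative ring. If A ∈ M_n(θ,R), then the classical adjugate matrix adj(A) belongs to M_n(θ,R). -/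
/-!
Expanding `adj(A) r s` as the determinant of `A` with row `s` replaced by the unit row `e_r`, the
only permutations `σ` that can contribute have `σ r = s` and `A (σ i) i ≠ 0`, hence `θ (σ i) i`,
for every `i ≠ r`. Walking along the cycle of `σ` from `σ r = s` back to `r` then yields a
`θ`-chain from `r` to `s`, so `θ r s` by transitivity.
-/

open Equiv Relation

/-- The second alternative holds once the orbit of `x` has passed through `r`. -/
theorem Function.reflTransGen_iterate_or {α : Type*} {θ : α → α → Prop} {f : α → α} {r : α}
    (h : ∀ i, i ≠ r → θ (f i) i) (x : α) (k : ℕ) :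
    ReflTransGen θ (f^[k] x) x ∨ ReflTransGen θ r x := by
  induction k with
  | zero => exact Or.inl ReflTransGen.refl
  | succ k ih =>
    rcases ih with hk | hr
    · by_cases hkr : f^[k] x = r
      · exact Or.inr (hkr ▸ hk)
      · rw [Function.iterate_succ_apply']
        exact Or.inl (ReflTransGen.head (h _ hkr) hk)
    · exact Or.inr hr

theorem Equiv.Perm.reflTransGen_apply_self {α : Type*} [Finite α] {θ : α → α → Prop}
    (σ : Perm α) {r : α} (h : ∀ i, i ≠ r → θ (σ i) i) : ReflTransGen θ r (σ r) := by
  obtain ⟨k, -, hk⟩ := (Perm.sameCycle_apply_left.mpr (Perm.SameCycle.refl σ r)).exists_pow_eq'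
  rw [Perm.coe_pow] at hk
  rcases Function.reflTransGen_iterate_or h (σ r) k with hσ | hσ
  · rwa [hk] at hσ
  · exact hσ

theorem Matrix.adjugate_apply_eq_zero_of_forall_perm {ι R : Type*} [Fintype ι] [DecidableEq ι]
    [CommRing R] {A : Matrix ι ι R} {r s : ι}
    (h : ∀ σ : Perm ι, σ r = s → ∃ i, i ≠ r ∧ A (σ i) i = 0) : A.adjugate r s = 0 := by
  rw [adjugate_apply, det_apply]
  refine Finset.sum_eq_zero fun σ _ => ?_
  suffices ∏ i, updateRow A s (Pi.single r (1 : R)) (σ i) i = 0 by rw [this, smul_zero]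
  by_cases hσ : σ r = s
  · obtain ⟨i, hir, hi⟩ := h σ hσ
    have hσi : σ i ≠ s := hσ ▸ σ.injective.ne hir
    exact Finset.prod_eq_zero (Finset.mem_univ i) (by rwa [updateRow_ne hσi])
  · have hr : σ.symm s ≠ r := fun he => hσ (he ▸ σ.apply_symm_apply s)
    refine Finset.prod_eq_zero (Finset.mem_univ (σ.symm s)) ?_
    rw [σ.apply_symm_apply, updateRow_self, Pi.single_eq_of_ne hr]

/-- Let `θ` be a reflexive and transitive binary relation on `{1, …, n}` and let `R` be
a commutative ring.  If `A ∈ Mₙ(θ,R)`, then the classical adjugate (adjoint) matrix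
`adj(A)` belongs to `Mₙ(θ,R)`. -/
theorem stmt_17 {R : Type*} [CommRing R] {n : ℕ}
    (θ : Fin n → Fin n → Prop)
    (hrefl : ∀ i, θ i i) (htrans : ∀ i j k, θ i j → θ j k → θ i k)
    (A : Matrix (Fin n) (Fin n) R)
    (hA : ∀ i j, ¬ θ i j → A i j = 0) :
    ∀ r s, ¬ θ r s → A.adjugate r s = 0 := by
  have : Std.Refl θ := ⟨hrefl⟩
  have : IsTrans (Fin n) θ := ⟨htrans⟩
  intro r s hrs
  refine Matrix.adjugate_apply_eq_zero_of_forall_perm fun σ hσ => ?_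
  by_contra! hne
  have hchain : ReflTransGen θ r (σ r) :=
    σ.reflTransGen_apply_self fun i hi => by_contra fun hθ => hne i hi (hA _ _ hθ)
  rw [reflTransGen_eq_self, hσ] at hchain
  exact hrs hchain
end

section
/- Let R be a ring containing elements x, y with xy = 1 and yx ≠ 1. Then the matrix A = [[y, 1 − yx], [0, x]] ∈ M_2(R) is invertible in M_2(R) with inverse A⁻¹ = [[x, 0], [1 − yx, y]]; in particular, A belongs to the upper triangular structural matrix ring M_2(θ,R) with θ = {(1,1),(1,2),(2,2)}, while A⁻¹ does not belong to M_2(θ,R). -/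
/-! If `x * y = 1` then `e = 1 - y * x` is an idempotent with `x * e = 0 = e * y`; these three
identities are exactly what makes the two matrices mutually inverse. The lower-left entry of the
inverse is `e`, which is nonzero precisely because `y * x ≠ 1`. -/

section LeftInverse

variable {R : Type*} [Ring R] {x y : R}

theorem isIdempotentElem_mul_of_mul_eq_one (h : x * y = 1) : IsIdempotentElem (y * x) := by
  rw [IsIdempotentElem, mul_assoc, ← mul_assoc x, h, one_mul]

theorem mul_one_sub_mul_of_mul_eq_one (h : x * y = 1) : x * (1 - y * x) = 0 := by
  rw [mul_sub, mul_one, ← mul_assoc, h, one_mul, sub_self]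

theorem one_sub_mul_mul_of_mul_eq_one (h : x * y = 1) : (1 - y * x) * y = 0 := by
  rw [sub_mul, one_mul, mul_assoc, h, mul_one, sub_self]

theorem matrix_mul_inverse_of_mul_eq_one (h : x * y = 1) :
    !![y, 1 - y * x; 0, x] * !![x, 0; 1 - y * x, y] = 1 := by
  rw [Matrix.mul_fin_two, Matrix.one_fin_two,
    (isIdempotentElem_mul_of_mul_eq_one h).one_sub.eq, one_sub_mul_mul_of_mul_eq_one h,
    mul_one_sub_mul_of_mul_eq_one h, h]
  simp

theorem matrix_inverse_mul_of_mul_eq_one (h : x * y = 1) :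
    !![x, 0; 1 - y * x, y] * !![y, 1 - y * x; 0, x] = 1 := by
  rw [Matrix.mul_fin_two, Matrix.one_fin_two,
    (isIdempotentElem_mul_of_mul_eq_one h).one_sub.eq, one_sub_mul_mul_of_mul_eq_one h,
    mul_one_sub_mul_of_mul_eq_one h, h]
  simp

end LeftInverse

theorem Matrix.fin_two_below_diagonal_eq_zero_iff {α : Type*} [Zero α] (a b c d : α) :
    (∀ i j : Fin 2, ¬ i ≤ j → !![a, b; c, d] i j = 0) ↔ c = 0 := by
  refine ⟨fun h ↦ h 1 0 (by decide), fun hc i j hij ↦ ?_⟩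
  fin_cases i <;> fin_cases j <;> simp_all

/-- Let `R` be a ring with elements `x, y` satisfying `xy = 1` and `yx ≠ 1`.  Then the
matrix `A = [[y, 1-yx],[0,x]]` is invertible in `M₂(R)` with inverse
`A⁻¹ = [[x, 0],[1-yx, y]]`; in particular `A` belongs to the upper triangular structural
matrix ring `M₂(θ,R)` with `θ = {(1,1),(1,2),(2,2)}` (i.e. `θ i j ↔ i ≤ j`), while
`A⁻¹` does not belong to `M₂(θ,R)`. -/
theorem stmt_18 {R : Type*} [Ring R] (x y : R) (hxy : x * y = 1) (hyx : y * x ≠ 1) :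
    !![y, 1 - y * x; 0, x] * !![x, 0; 1 - y * x, y] = 1 ∧
    !![x, 0; 1 - y * x, y] * !![y, 1 - y * x; 0, x] = 1 ∧
    (∀ i j : Fin 2, ¬ i ≤ j → !![y, 1 - y * x; 0, x] i j = 0) ∧
    ¬ (∀ i j : Fin 2, ¬ i ≤ j → !![x, 0; 1 - y * x, y] i j = 0) := by
  simp only [Matrix.fin_two_below_diagonal_eq_zero_iff, sub_eq_zero, ne_comm.mp hyx,
    not_false_eq_true, and_true]
  exact ⟨matrix_mul_inverse_of_mul_eq_one hxy, matrix_inverse_mul_of_mul_eq_one hxy⟩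
end
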